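/- arXiv:1705.00388 — 10 statements merged into one kernel-verified Lean document; each statement's English description precedes it below -/
import Mathlib

section
/- For coprime integers a, b both coprime to m ≥ 1, the Euler quotients satisfy Q_m(ab) ≡ Q_m(a) + Q_m(b) (mod m), where Q_m(x) = (x^φ(m) - 1)/m. -/
theorem Int.dvd_pow_totient_sub_one {m : ℕ} {a : ℤ} (ha : IsCoprime a m) :
    (m : ℤ) ∣ a ^ m.totient - 1 := by
  have hunit : IsUnit (a : ZMod m) := by
    simpa [isCoprime_zero_right] using ha.intCast (R := ZMod m)
  rw [← ZMod.intCast_zmod_eq_zero_iff_dvd]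
  push_cast
  rw [← hunit.unit_spec, ← Units.val_pow_eq_pow_val, ZMod.pow_totient, Units.val_one, sub_self]

theorem Int.mul_sub_one_ediv_modEq {n x y : ℤ} (hx : n ∣ x - 1) (hy : n ∣ y - 1) :
    (x * y - 1) / n ≡ (x - 1) / n + (y - 1) / n [ZMOD n] := by
  obtain ⟨s, hs⟩ := hx
  obtain ⟨t, ht⟩ := hy
  rcases eq_or_ne n 0 with rfl | hn
  · simp
  have hxy : x * y - 1 = n * (s + t + n * s * t) := by
    rw [show x = n * s + 1 by omega, show y = n * t + 1 by omega]; ring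
  rw [hxy, hs, ht, Int.mul_ediv_cancel_left _ hn, Int.mul_ediv_cancel_left _ hn,
    Int.mul_ediv_cancel_left _ hn]
  exact Int.modEq_iff_dvd.mpr ⟨-(s * t), by ring⟩

theorem euler_quotient_add_general (m : ℕ) (a b : ℤ)
    (ha : IsCoprime a (m : ℤ)) (hb : IsCoprime b (m : ℤ)) :
    ((a * b) ^ Nat.totient m - 1) / m ≡
      (a ^ Nat.totient m - 1) / m + (b ^ Nat.totient m - 1) / m [ZMOD (m : ℤ)] := by
  rw [mul_pow]
  exact Int.mul_sub_one_ediv_modEq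
    (Int.dvd_pow_totient_sub_one ha) (Int.dvd_pow_totient_sub_one hb)

theorem euler_quotient_add (m : ℕ) (hm : 1 ≤ m) (a b : ℤ)
    (ha : IsCoprime a (m : ℤ)) (hb : IsCoprime b (m : ℤ)) :
    ((a * b) ^ Nat.totient m - 1) / m ≡
      (a ^ Nat.totient m - 1) / m + (b ^ Nat.totient m - 1) / m [ZMOD (m : ℤ)] :=
  euler_quotient_add_general m a b ha hb
end

section
/- If a and b are integers coprime to m with a ≡ b (mod m²), then Q_m(a) ≡ Q_m(b) (mod m), where Q_m(x) = (x^φ(m) - 1)/m. -/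
theorem euler_quotient_congr (m : ℕ) (hm : 1 ≤ m) (a b : ℤ)
    (ha : IsCoprime a (m : ℤ)) (hb : IsCoprime b (m : ℤ))
    (hab : a ≡ b [ZMOD ((m : ℤ) ^ 2)]) :
    (a ^ Nat.totient m - 1) / m ≡ (b ^ Nat.totient m - 1) / m [ZMOD (m : ℤ)] := by
  haveI : NeZero m := ⟨by omega⟩
  have hm0 : (m : ℤ) ≠ 0 := by exact_mod_cast (by omega : m ≠ 0)
  have key : ∀ x : ℤ, IsCoprime x (m : ℤ) → (m : ℤ) ∣ x ^ Nat.totient m - 1 := by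
    intro x hx
    have hu : IsUnit (x : ZMod m) := by
      have h := hx.map (Int.castRingHom (ZMod m))
      simp only [map_natCast, ZMod.natCast_self] at h
      exact isCoprime_zero_right.mp (by simpa using h)
    have h1 : (x : ZMod m) ^ Nat.totient m = 1 := by
      rw [← hu.unit_spec, ← Units.val_pow_eq_pow_val, ZMod.pow_totient, Units.val_one]
    have : ((x ^ Nat.totient m - 1 : ℤ) : ZMod m) = 0 := by push_cast; rw [h1]; ring
    exact (ZMod.intCast_zmod_eq_zero_iff_dvd _ _).mp this
  obtain ⟨c, hc⟩ := key a ha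
  obtain ⟨d, hd⟩ := key b hb
  have h3 : ((m : ℤ) ^ 2) ∣ b ^ Nat.totient m - a ^ Nat.totient m :=
    (Int.ModEq.dvd (hab.pow (Nat.totient m)))
  obtain ⟨e, he⟩ := h3
  have hcd : d - c = (m : ℤ) * e := by
    have : (m : ℤ) * (d - c) = (m : ℤ) * ((m : ℤ) * e) := by
      rw [mul_sub, ← hc, ← hd]; linear_combination he
    exact mul_left_cancel₀ hm0 this
  rw [hc, hd, Int.mul_ediv_cancel_left _ hm0, Int.mul_ediv_cancel_left _ hm0]
  rw [Int.modEq_iff_dvd]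
  exact ⟨e, hcd⟩
end

section
/- If a and b are integers coprime to m with a ≡ b (mod m²), then C_m(a) ≡ C_m(b) (mod m), where C_m(x) = (x^λ(m) - 1)/m and λ is the Carmichael function. -/
/-- The Carmichael function: the exponent of the multiplicative group mod `m`. -/
noncomputable def carmichael (m : ℕ) : ℕ := Monoid.exponent (ZMod m)ˣ

/-- The radical of `m`: the product of the distinct primes dividing `m`. -/
def radN (m : ℕ) : ℕ := ∏ p ∈ m.primeFactors, p

/-- `δ(m) = 2` if `4 ∣ m`, else `1`. -/
def deltaN (m : ℕ) : ℕ := if 4 ∣ m then 2 else 1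

/-- `d(m) = gcd(m, δ(m)·φ(rad m))`. -/
def dFun (m : ℕ) : ℕ := Nat.gcd m (deltaN m * Nat.totient (radN m))

/-- `f(m) = gcd(m, δ(m)·λ(m)·φ(rad m)/φ(m))`. -/
noncomputable def fFun (m : ℕ) : ℕ :=
  Nat.gcd m (deltaN m * carmichael m * Nat.totient (radN m) / Nat.totient m)

theorem Int.ediv_modEq_ediv {m n u v : ℤ} (hu : m ∣ u) (hv : m ∣ v) (h : u ≡ v [ZMOD m * n]) :
    u / m ≡ v / m [ZMOD n] := by
  obtain ⟨x, rfl⟩ := hu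
  obtain ⟨y, rfl⟩ := hv
  rcases eq_or_ne m 0 with rfl | hm
  · simp [Int.ModEq.refl]
  rw [Int.mul_ediv_cancel_left _ hm, Int.mul_ediv_cancel_left _ hm, Int.modEq_iff_dvd]
  rw [Int.modEq_iff_dvd, ← mul_sub] at h
  exact (mul_dvd_mul_iff_left hm).mp h

theorem pow_carmichael_modEq_one {m : ℕ} {a : ℤ} (ha : IsCoprime a m) :
    a ^ carmichael m ≡ 1 [ZMOD m] := by
  have h := congrArg Units.val (Monoid.pow_exponent_eq_one (ZMod.unitOfIsCoprime a ha))
  rw [Units.val_pow_eq_pow_val, ZMod.coe_unitOfIsCoprime, Units.val_one] at h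
  exact (ZMod.intCast_eq_intCast_iff _ _ m).mp (by push_cast; exact h)

theorem carmichael_quotient_congr_general (m : ℕ) (a b : ℤ)
    (ha : IsCoprime a (m : ℤ)) (hb : IsCoprime b (m : ℤ))
    (hab : a ≡ b [ZMOD ((m : ℤ) ^ 2)]) :
    (a ^ carmichael m - 1) / m ≡ (b ^ carmichael m - 1) / m [ZMOD (m : ℤ)] := by
  apply Int.ediv_modEq_ediv
  · exact (pow_carmichael_modEq_one ha).symm.dvd
  · exact (pow_carmichael_modEq_one hb).symm.dvd
  · rw [← sq]
    exact (hab.pow _).sub_right 1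

theorem carmichael_quotient_congr (m : ℕ) (hm : 1 ≤ m) (a b : ℤ)
    (ha : IsCoprime a (m : ℤ)) (hb : IsCoprime b (m : ℤ))
    (hab : a ≡ b [ZMOD ((m : ℤ) ^ 2)]) :
    (a ^ carmichael m - 1) / m ≡ (b ^ carmichael m - 1) / m [ZMOD (m : ℤ)] :=
  carmichael_quotient_congr_general m a b ha hb hab
end

section
/- For every squarefree integer m with m > 1 and m ≠ 6, we have gcd(m, φ(m)) ≤ m · exp(−√(log 2 · log m)). -/
open Finset

private lemma totient_sf (m : ℕ) (hm : Squarefree m) :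
    m.totient = ∏ p ∈ m.primeFactors, (p-1) := by
  have h0 : m ≠ 0 := hm.ne_zero
  rw [Nat.totient_eq_prod_factorization h0, Nat.prod_factorization_eq_prod_primeFactors]
  apply Finset.prod_congr rfl
  intro p hp
  have h1 : m.factorization p = 1 := by
    have hle := (Nat.squarefree_iff_factorization_le_one h0).mp hm p
    have hge : 1 ≤ m.factorization p := by
      rw [← Nat.Prime.pow_dvd_iff_le_factorization (Nat.prime_of_mem_primeFactors hp) h0]
      simpa using Nat.dvd_of_mem_primeFactors hp
    omega
  rw [h1]; simp

/-- levels of the witness-chain construction -/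
private def chA (m g : ℕ) : ℕ → Finset ℕ
  | 0 => m.primeFactors.filter fun q => ¬ q ∣ g
  | k+1 => chA m g k ∪ (m.primeFactors.filter fun q =>
      q ∣ g ∧ ∃ p ∈ chA m g k, q ∣ p - 1)

private lemma chA_subset_pf (m g k : ℕ) : chA m g k ⊆ m.primeFactors := by
  induction k with
  | zero => exact filter_subset _ _
  | succ k ih => exact union_subset ih (filter_subset _ _)

private lemma chA_mono (m g : ℕ) {k l : ℕ} (h : k ≤ l) : chA m g k ⊆ chA m g l := by
  induction l with
  | zero => simpa [Nat.le_zero.mp h]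
  | succ l ih =>
    rcases Nat.lt_or_ge k (l+1) with h' | h'
    · exact (ih (Nat.lt_succ_iff.mp h')).trans (subset_union_left)
    · have : k = l + 1 := le_antisymm h h'
      subst this; rfl


private lemma two_mul_le {q p : ℕ} (hq : q.Prime) (hq2 : q ≠ 2) (hp : p.Prime)
    (hqp : q < p) (hd : q ∣ p - 1) : 2 * q ≤ p - 1 := by
  have hp2 : p ≠ 2 := by have := hq.two_le; omega
  have hpodd : Odd p := hp.odd_of_ne_two hp2
  have h2d : 2 ∣ p - 1 := by
    obtain ⟨j, hj⟩ := hpodd; omega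
  have hcop : Nat.Coprime 2 q := (Nat.coprime_primes Nat.prime_two hq).mpr (fun h => hq2 h.symm)
  have hmul : 2 * q ∣ p - 1 := Nat.Coprime.mul_dvd_of_dvd_of_dvd hcop h2d hd
  exact Nat.le_of_dvd (by have := hp.two_le; omega) hmul


private lemma prod_le_prod_witness (s t : Finset ℕ)
    (hs : ∀ q ∈ s, Nat.Prime q) (ht : ∀ p ∈ t, 2 ≤ p)
    (hw : ∀ q ∈ s, ∃ p ∈ t, q ∣ p - 1) :
    ∏ q ∈ s, q ≤ ∏ p ∈ t, p := by
  classical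
  set W : ℕ → ℕ := fun q => if h : ∃ p ∈ t, q ∣ p - 1 then h.choose else 0 with hW
  have hWt : ∀ q ∈ s, W q ∈ t := by
    intro q hq
    obtain ⟨p, hp, hd⟩ := hw q hq
    simp only [hW, dif_pos (⟨p, hp, hd⟩ : ∃ p ∈ t, q ∣ p - 1)]
    exact (Exists.choose_spec (⟨p, hp, hd⟩ : ∃ p ∈ t, q ∣ p - 1)).1
  have hWd : ∀ q ∈ s, q ∣ W q - 1 := by
    intro q hq
    obtain ⟨p, hp, hd⟩ := hw q hq
    simp only [hW, dif_pos (⟨p, hp, hd⟩ : ∃ p ∈ t, q ∣ p - 1)]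
    exact (Exists.choose_spec (⟨p, hp, hd⟩ : ∃ p ∈ t, q ∣ p - 1)).2
  rw [← Finset.prod_fiberwise_of_maps_to hWt (fun q => q)]
  apply Finset.prod_le_prod'
  intro p hp
  have hfib : ∏ q ∈ s.filter (fun q => W q = p), q ∣ p - 1 := by
    apply Finset.prod_primes_dvd
    · intro a ha; exact (hs a (mem_filter.mp ha).1).prime
    · intro a ha
      have h2 := (mem_filter.mp ha).2
      have := hWd a (mem_filter.mp ha).1
      rwa [h2] at this
  have hp2 := ht p hp
  have := Nat.le_of_dvd (by omega) hfib
  omega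

section Main

variable {m g : ℕ} (hsq : Squarefree m) (hgφ : g ∣ m.totient) (hgm : g ∣ m)

include hsq hgφ in
/-- every prime dividing g has a larger prime witness p | m with q | p - 1 -/
private lemma witness {q : ℕ} (hq : q.Prime) (hqg : q ∣ g) :
    ∃ p ∈ m.primeFactors, q ∣ p - 1 ∧ q < p := by
  have hdvd : q ∣ ∏ p ∈ m.primeFactors, (p-1) := by
    rw [← totient_sf m hsq]; exact hqg.trans hgφ
  obtain ⟨p, hp, hqp⟩ := (Nat.Prime.prime hq).exists_mem_finset_dvd hdvd
  refine ⟨p, hp, hqp, ?_⟩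
  have hpp := (Nat.prime_of_mem_primeFactors hp).two_le
  have h1 : 1 ≤ p - 1 := by omega
  have := Nat.le_of_dvd (by omega) hqp
  omega

include hsq hgφ in
private lemma all_in_chA : ∀ n q, q ∈ m.primeFactors →
    (m.primeFactors.filter fun p => q < p).card ≤ n → q ∈ chA m g n := by
  intro n
  induction n with
  | zero =>
    intro q hqpf hcard
    by_cases hqg : q ∣ g
    · obtain ⟨p, hp, _, hqp⟩ := witness hsq hgφ (Nat.prime_of_mem_primeFactors hqpf) hqg
      exfalso
      have : p ∈ m.primeFactors.filter fun p => q < p := mem_filter.mpr ⟨hp, hqp⟩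
      have := card_pos.mpr ⟨p, this⟩
      omega
    · exact mem_filter.mpr ⟨hqpf, hqg⟩
  | succ n ih =>
    intro q hqpf hcard
    by_cases hqg : q ∣ g
    · obtain ⟨p, hp, hdvd, hqp⟩ := witness hsq hgφ (Nat.prime_of_mem_primeFactors hqpf) hqg
      have hpchA : p ∈ chA m g n := by
        apply ih p hp
        have hss : (m.primeFactors.filter fun r => p < r) ⊂
            (m.primeFactors.filter fun r => q < r) := by
          refine ssubset_iff_of_subset ?_ |>.mpr ⟨p, mem_filter.mpr ⟨hp, hqp⟩, by simp⟩
          intro r hr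
          rw [mem_filter] at hr ⊢
          exact ⟨hr.1, lt_trans hqp hr.2⟩
        have := card_lt_card hss
        omega
      exact mem_union_right _ (mem_filter.mpr ⟨hqpf, hqg, p, hpchA, hdvd⟩)
    · exact chA_mono m g (Nat.zero_le _) (mem_filter.mpr ⟨hqpf, hqg⟩)

include hsq hgm in
private lemma prod_filter_dvd : ∏ q ∈ m.primeFactors.filter (· ∣ g), q = g := by
  have hg0 : g ≠ 0 := fun h => hsq.ne_zero (by simpa [h] using hgm)
  have hpf : g.primeFactors = m.primeFactors.filter (· ∣ g) := by
    ext q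
    simp only [Nat.mem_primeFactors, mem_filter]
    constructor
    · rintro ⟨h1, h2, h3⟩; exact ⟨⟨h1, h2.trans hgm, hsq.ne_zero⟩, h2⟩
    · rintro ⟨⟨h1, h2, h3⟩, h4⟩; exact ⟨h1, h4, hg0⟩
  rw [← hpf, Nat.prod_primeFactors_of_squarefree (hsq.squarefree_of_dvd hgm)]

include hsq hgm in
private lemma prod_chA_zero : ∏ q ∈ chA m g 0, q = m / g := by
  have key := prod_filter_dvd hsq hgm
  have h0 := Finset.prod_filter_not_mul_prod_filter (s := m.primeFactors)
    (p := (· ∣ g)) (f := fun q => q)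
  rw [key, Nat.prod_primeFactors_of_squarefree hsq] at h0
  have hg0 : 0 < g := Nat.pos_of_ne_zero (fun h => hsq.ne_zero (by simpa [h] using hgm))
  exact (Nat.div_eq_of_eq_mul_left hg0 h0.symm).symm

private lemma mem_succ_elim {k q : ℕ} (hq : q ∈ chA m g (k+1) \ chA m g k) :
    q ∈ m.primeFactors ∧ q ∣ g ∧ ∃ p ∈ chA m g k, q ∣ p - 1 := by
  rw [mem_sdiff] at hq
  obtain ⟨h1, h2⟩ := hq
  rcases mem_union.mp h1 with h | h
  · exact absurd h h2
  · obtain ⟨hpf, hdvd, hex⟩ := mem_filter.mp h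
    exact ⟨hpf, hdvd, hex⟩

private lemma witness_level {k q p : ℕ} (hq : q ∈ chA m g (k+2) \ chA m g (k+1))
    (hp : p ∈ chA m g (k+1)) (hd : q ∣ p - 1) : p ∈ chA m g (k+1) \ chA m g k := by
  rw [mem_sdiff] at hq ⊢
  refine ⟨hp, fun hpk => hq.2 ?_⟩
  obtain ⟨hpf, hdvd, _⟩ := mem_succ_elim (mem_sdiff.mpr hq)
  exact mem_union_right _ (mem_filter.mpr ⟨hpf, hdvd, p, hpk, hd⟩)

include hsq hgm in
private lemma le_h_of_mem_chA_zero {p : ℕ} (hp : p ∈ chA m g 0) : p ≤ m / g := by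
  have h1 : p ∣ m / g := by
    rw [← prod_chA_zero hsq hgm]
    exact dvd_prod_of_mem _ hp
  have h2 : 0 < m / g := by
    rw [← prod_chA_zero hsq hgm]
    exact prod_pos (fun q hq => (Nat.prime_of_mem_primeFactors (chA_subset_pf m g 0 hq)).pos)
  exact Nat.le_of_dvd h2 h1

include hsq hgφ hgm in
private lemma chA_growth : ∀ k, ∀ q ∈ chA m g (k+1) \ chA m g k,
    (q = 2 ∧ 3 * 2^k ≤ m / g) ∨ 2^(k+1) * q ≤ m / g := by
  intro k
  induction k with
  | zero =>
    intro q hq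
    obtain ⟨hqpf, hqg, p, hp, hd⟩ := mem_succ_elim hq
    have hqP := Nat.prime_of_mem_primeFactors hqpf
    have hpP := Nat.prime_of_mem_primeFactors (chA_subset_pf m g 0 hp)
    have hqp : q < p := by
      have h2 := hpP.two_le
      have := Nat.le_of_dvd (by omega) hd
      omega
    have hph : p ≤ m / g := le_h_of_mem_chA_zero hsq hgm hp
    by_cases hq2 : q = 2
    · left
      refine ⟨hq2, ?_⟩
      have := hqP.two_le
      omega
    · right
      have := two_mul_le hqP hq2 hpP hqp hd
      have := hpP.two_le
      omega
  | succ k ih =>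
    intro q hq
    obtain ⟨hqpf, hqg, p, hp, hd⟩ := mem_succ_elim hq
    have hqP := Nat.prime_of_mem_primeFactors hqpf
    have hplevel := witness_level hq hp hd
    have hpP := Nat.prime_of_mem_primeFactors
      (chA_subset_pf m g (k+1) (mem_sdiff.mp hplevel).1)
    have hqp : q < p := by
      have h2 := hpP.two_le
      have := Nat.le_of_dvd (by omega) hd
      omega
    have hp2 : p ≠ 2 := by have := hqP.two_le; omega
    have hgrow : 2^(k+1) * p ≤ m / g := by
      rcases ih p hplevel with ⟨h2, _⟩ | h
      · exact absurd h2 hp2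
      · exact h
    by_cases hq2 : q = 2
    · left
      refine ⟨hq2, ?_⟩
      have h3 : 3 ≤ p := by
        have := hpP.two_le
        omega
      calc 3 * 2^(k+1) = 2^(k+1) * 3 := by ring
        _ ≤ 2^(k+1) * p := Nat.mul_le_mul_left _ h3
        _ ≤ m / g := hgrow
    · right
      have h2q : 2 * q ≤ p - 1 := two_mul_le hqP hq2 hpP hqp hd
      have hpp := hpP.two_le
      calc 2^(k+1+1) * q = 2^(k+1) * (2 * q) := by ring
        _ ≤ 2^(k+1) * p := Nat.mul_le_mul_left _ (by omega)
        _ ≤ m / g := hgrow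

include hsq hgm in
private lemma prod_level_le : ∀ k, ∏ q ∈ chA m g (k+1) \ chA m g k, q ≤ m / g := by
  intro k
  induction k with
  | zero =>
    calc ∏ q ∈ chA m g 1 \ chA m g 0, q ≤ ∏ p ∈ chA m g 0, p := by
          apply prod_le_prod_witness
          · intro q hq
            exact Nat.prime_of_mem_primeFactors
              (chA_subset_pf m g 1 (mem_sdiff.mp hq).1)
          · intro p hp
            exact (Nat.prime_of_mem_primeFactors (chA_subset_pf m g 0 hp)).two_le
          · intro q hq
            obtain ⟨_, _, p, hp, hd⟩ := mem_succ_elim hq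
            exact ⟨p, hp, hd⟩
      _ = m / g := prod_chA_zero hsq hgm
  | succ k ih =>
    calc ∏ q ∈ chA m g (k+2) \ chA m g (k+1), q
        ≤ ∏ p ∈ chA m g (k+1) \ chA m g k, p := by
          apply prod_le_prod_witness
          · intro q hq
            exact Nat.prime_of_mem_primeFactors
              (chA_subset_pf m g (k+2) (mem_sdiff.mp hq).1)
          · intro p hp
            exact (Nat.prime_of_mem_primeFactors
              (chA_subset_pf m g (k+1) (mem_sdiff.mp hp).1)).two_le
          · intro q hq
            obtain ⟨_, _, p, hp, hd⟩ := mem_succ_elim hq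
            exact ⟨p, witness_level hq hp hd, hd⟩
      _ ≤ m / g := ih

include hsq hgφ hgm in
private lemma assembly (hm : 1 < m) (hm6 : m ≠ 6) (hg2 : 2 ≤ g) :
    ∃ t : ℕ, 3 * 2^t ≤ m / g ∧ m ≤ 2 * (m / g)^(t+1) ∧ 5 ≤ m / g := by
  classical
  have hgh : g * (m / g) = m := Nat.mul_div_cancel' hgm
  have hh0 : 0 < m / g := by
    rcases Nat.eq_zero_or_pos (m / g) with h | h
    · rw [h, mul_zero] at hgh; omega
    · exact h
  -- the maximal prime of m does not divide g
  have hpf_ne : m.primeFactors.Nonempty := Nat.nonempty_primeFactors.mpr hm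
  set Q := m.primeFactors.max' hpf_ne with hQdef
  have hQpf : Q ∈ m.primeFactors := max'_mem _ _
  have hQP : Nat.Prime Q := Nat.prime_of_mem_primeFactors hQpf
  have hQg : ¬ Q ∣ g := by
    intro hd
    obtain ⟨p, hp, _, hlt⟩ := witness hsq hgφ hQP hd
    have := le_max' _ p hp
    omega
  have hQ0 : Q ∈ chA m g 0 := mem_filter.mpr ⟨hQpf, hQg⟩
  have hQd : Q ∣ m / g := by
    rw [← prod_chA_zero hsq hgm]
    exact dvd_prod_of_mem _ hQ0
  -- h ≥ 5
  have h5 : 5 ≤ m / g := by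
    have hQh : Q ≤ m / g := Nat.le_of_dvd hh0 hQd
    have hh2 : 2 ≤ m / g := le_trans hQP.two_le hQh
    by_contra hlt
    push_neg at hlt
    have hsqh : Squarefree (m / g) := hsq.squarefree_of_dvd (Nat.div_dvd_of_dvd hgm)
    have hne4 : m / g ≠ 4 := by
      intro h4; rw [h4] at hsqh; exact (by decide : ¬ Squarefree 4) hsqh
    have hh3 : m / g ≤ 3 := by omega
    have hQ3 : Q ≤ 3 := le_trans hQh hh3
    have hpfsub : m.primeFactors ⊆ ({2, 3} : Finset ℕ) := by
      intro p hp
      have hpP := Nat.prime_of_mem_primeFactors hp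
      have hle := le_max' _ p hp
      have h2 := hpP.two_le
      have h3 : p ≤ 3 := le_trans hle hQ3
      simp only [mem_insert, mem_singleton]
      omega
    have hmd : m ∣ 6 := by
      have h1 : m = ∏ p ∈ m.primeFactors, p := (Nat.prod_primeFactors_of_squarefree hsq).symm
      rw [h1]
      calc ∏ p ∈ m.primeFactors, p ∣ ∏ p ∈ ({2,3}:Finset ℕ), p :=
            Finset.prod_dvd_prod_of_subset _ _ _ hpfsub
        _ = 6 := by decide
    have hm4 : 4 ≤ m := by
      calc 4 = 2 * 2 := by norm_num
        _ ≤ g * (m / g) := Nat.mul_le_mul hg2 hh2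
        _ = m := hgh
    have hm6le : m ≤ 6 := Nat.le_of_dvd (by norm_num) hmd
    obtain ⟨c, hc⟩ := hmd
    have hc2 : c < 2 := by
      by_contra hcge
      push_neg at hcge
      have : 4 * 2 ≤ m * c := Nat.mul_le_mul hm4 hcge
      omega
    interval_cases c <;> omega
  -- decomposition of the product over levels
  have hdecomp : ∀ j, ∏ q ∈ chA m g j \ chA m g 0, q
      = ∏ k ∈ range j, ∏ q ∈ chA m g (k+1) \ chA m g k, q := by
    intro j
    induction j with
    | zero => simp
    | succ j ih =>
      rw [prod_range_succ, ← ih]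
      have h0j : chA m g 0 ⊆ chA m g j := chA_mono m g (Nat.zero_le _)
      have hjj : chA m g j ⊆ chA m g (j+1) := chA_mono m g (by omega)
      have hsplit : chA m g (j+1) \ chA m g 0
          = (chA m g j \ chA m g 0) ∪ (chA m g (j+1) \ chA m g j) := by
        ext x
        simp only [mem_sdiff, mem_union]
        constructor
        · rintro ⟨h1, h2⟩
          by_cases hx : x ∈ chA m g j
          · exact Or.inl ⟨hx, h2⟩
          · exact Or.inr ⟨h1, hx⟩
        · rintro (⟨h1, h2⟩ | ⟨h1, h2⟩)
          · exact ⟨hjj h1, h2⟩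
          · exact ⟨h1, fun hx => h2 (h0j hx)⟩
      rw [hsplit, prod_union]
      exact Finset.disjoint_left.mpr (fun a ha hb => (mem_sdiff.mp hb).2 (mem_sdiff.mp ha).1)
  set s := m.primeFactors.card with hs
  have hsub : m.primeFactors.filter (· ∣ g) ⊆ chA m g s \ chA m g 0 := by
    intro q hq
    obtain ⟨hqpf, hqg⟩ := mem_filter.mp hq
    rw [mem_sdiff]
    refine ⟨all_in_chA hsq hgφ s q hqpf (card_le_card (filter_subset _ _)), ?_⟩
    intro h0; exact (mem_filter.mp h0).2 hqg
  have hgdvd : g ∣ ∏ q ∈ chA m g s \ chA m g 0, q := by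
    conv_lhs => rw [← prod_filter_dvd hsq hgm]
    exact Finset.prod_dvd_prod_of_subset _ _ _ hsub
  -- split range s into levels containing an odd prime (F) and the rest
  set P : ℕ → Prop := fun k => ∃ q ∈ chA m g (k+1) \ chA m g k, q ≠ 2 with hP
  set F := (range s).filter P with hF
  have hFbound : ∏ k ∈ F, (∏ q ∈ chA m g (k+1) \ chA m g k, q) ≤ (m/g)^F.card :=
    Finset.prod_le_pow_card _ _ _ (fun k _ => prod_level_le hsq hgm k)
  -- the complement contributes at most a factor 2
  set G := (range s).filter (fun k => ¬ P k) with hG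
  have htwo : ∀ k ∈ G, (chA m g (k+1) \ chA m g k).Nonempty →
      2 ∈ chA m g (k+1) \ chA m g k := by
    intro k hk hne
    obtain ⟨q, hq⟩ := hne
    have hq2 : q = 2 := by
      by_contra hne
      exact (mem_filter.mp hk).2 ⟨q, hq, hne⟩
    rwa [hq2] at hq
  have hGbound : ∏ k ∈ G, (∏ q ∈ chA m g (k+1) \ chA m g k, q) ≤ 2 := by
    set N := G.filter (fun k => (chA m g (k+1) \ chA m g k).Nonempty) with hN
    have hGN : ∏ k ∈ G, (∏ q ∈ chA m g (k+1) \ chA m g k, q)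
        = ∏ k ∈ N, (∏ q ∈ chA m g (k+1) \ chA m g k, q) := by
      refine (Finset.prod_subset (filter_subset _ _) ?_).symm
      intro k hk hkn
      have hempty : chA m g (k+1) \ chA m g k = ∅ :=
        not_nonempty_iff_eq_empty.mp (fun hne => hkn (mem_filter.mpr ⟨hk, hne⟩))
      simp [hempty]
    have huniq : ∀ k ∈ N, ∀ l ∈ N, k = l := by
      intro k hk l hl
      obtain ⟨hkG, hkne⟩ := mem_filter.mp hk
      obtain ⟨hlG, hlne⟩ := mem_filter.mp hl
      have h2k := htwo k hkG hkne
      have h2l := htwo l hlG hlne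
      by_contra hne
      rcases Nat.lt_or_ge k l with hlt | hge
      · have : (2:ℕ) ∈ chA m g l := chA_mono m g (by omega) (mem_sdiff.mp h2k).1
        exact (mem_sdiff.mp h2l).2 this
      · have hlt : l < k := by omega
        have : (2:ℕ) ∈ chA m g k := chA_mono m g (by omega) (mem_sdiff.mp h2l).1
        exact (mem_sdiff.mp h2k).2 this
    rw [hGN]
    rcases N.eq_empty_or_nonempty with hNe | ⟨a, ha⟩
    · rw [hNe]; simp
    · have hNa : N = {a} := by
        ext x
        simp only [mem_singleton]
        constructor
        · intro hx; exact huniq x hx a ha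
        · rintro rfl; exact ha
      rw [hNa, prod_singleton]
      obtain ⟨haG, hane⟩ := mem_filter.mp ha
      have hsub2 : chA m g (a+1) \ chA m g a ⊆ {2} := by
        intro q hq
        rw [mem_singleton]
        by_contra hne
        exact (mem_filter.mp haG).2 ⟨q, hq, hne⟩
      calc ∏ q ∈ chA m g (a+1) \ chA m g a, q ≤ ∏ q ∈ ({2}:Finset ℕ), q :=
            Finset.prod_le_prod_of_subset_of_one_le' hsub2 (fun i hi _ => by rw [mem_singleton] at hi; omega)
        _ = 2 := by decide
  -- card of F bound
  have hFcard : 3 * 2^F.card ≤ m / g := by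
    rcases F.eq_empty_or_nonempty with hFe | hFne
    · rw [hFe]
      simpa using le_trans (by norm_num : (3:ℕ) ≤ 5) h5
    · set M := F.max' hFne with hM
      have hMF : M ∈ F := F.max'_mem hFne
      obtain ⟨hMr, q, hqlevel, hq2⟩ := mem_filter.mp hMF
      have hgrowth := chA_growth hsq hgφ hgm M q hqlevel
      have hqP : q.Prime := Nat.prime_of_mem_primeFactors
        (chA_subset_pf m g (M+1) (mem_sdiff.mp hqlevel).1)
      have h3q : 3 ≤ q := by have := hqP.two_le; omega
      have h1 : 2^(M+1) * q ≤ m/g := by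
        rcases hgrowth with ⟨h2, _⟩ | h
        · exact absurd h2 hq2
        · exact h
      have hsubF : F ⊆ range (M+1) :=
        fun k hk => mem_range.mpr (by have := F.le_max' k hk; omega)
      have hcard : F.card ≤ M + 1 := le_trans (card_le_card hsubF) (by simp)
      calc 3 * 2^F.card ≤ 3 * 2^(M+1) :=
            Nat.mul_le_mul_left _ (Nat.pow_le_pow_right (by norm_num) hcard)
        _ = 2^(M+1) * 3 := by ring
        _ ≤ 2^(M+1) * q := Nat.mul_le_mul_left _ h3q
        _ ≤ m / g := h1
  -- g ≤ 2 * h^|F|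
  have hgle : g ≤ 2 * (m/g)^F.card := by
    have hpos : 0 < ∏ q ∈ chA m g s \ chA m g 0, q :=
      prod_pos (fun q hq => (Nat.prime_of_mem_primeFactors
        (chA_subset_pf m g s (mem_sdiff.mp hq).1)).pos)
    have h1 : g ≤ ∏ q ∈ chA m g s \ chA m g 0, q := Nat.le_of_dvd hpos hgdvd
    rw [hdecomp s] at h1
    have h2 := Finset.prod_filter_mul_prod_filter_not (range s) P
      (fun k => ∏ q ∈ chA m g (k+1) \ chA m g k, q)
    calc g ≤ ∏ k ∈ range s, ∏ q ∈ chA m g (k+1) \ chA m g k, q := h1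
      _ = (∏ k ∈ F, ∏ q ∈ chA m g (k+1) \ chA m g k, q)
          * ∏ k ∈ G, ∏ q ∈ chA m g (k+1) \ chA m g k, q := h2.symm
      _ ≤ (m/g)^F.card * 2 := Nat.mul_le_mul hFbound hGbound
      _ = 2 * (m/g)^F.card := by ring
  refine ⟨F.card, hFcard, ?_, h5⟩
  calc m = g * (m/g) := hgh.symm
    _ ≤ (2 * (m/g)^F.card) * (m/g) := Nat.mul_le_mul_right _ hgle
    _ = 2 * (m/g)^(F.card+1) := by ring

end Main

theorem gcd_totient_le_of_squarefree (m : ℕ) (hm : 1 < m) (hm6 : m ≠ 6)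
    (hsq : Squarefree m) :
    (Nat.gcd m (Nat.totient m) : ℝ) ≤
      (m : ℝ) * Real.exp (-Real.sqrt (Real.log 2 * Real.log m)) := by
  set g := Nat.gcd m (Nat.totient m) with hgdef
  have hgm : g ∣ m := Nat.gcd_dvd_left _ _
  have hgφ : g ∣ m.totient := Nat.gcd_dvd_right _ _
  have hmR : (2:ℝ) ≤ (m:ℝ) := by exact_mod_cast hm
  have hm0 : (0:ℝ) < m := by linarith
  have hl2 : (0:ℝ) < Real.log 2 := Real.log_pos (by norm_num)
  have hlm : Real.log 2 ≤ Real.log m := Real.log_le_log (by norm_num) hmR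
  have hlm0 : (0:ℝ) ≤ Real.log m := le_trans hl2.le hlm
  rcases Nat.lt_or_ge g 2 with hg1 | hg2
  · have hgne : g ≠ 0 := by
      rw [hgdef, Ne, Nat.gcd_eq_zero_iff]
      intro ⟨h1, _⟩; omega
    have hg1' : g = 1 := by omega
    rw [hg1']
    have hsqrt : Real.sqrt (Real.log 2 * Real.log m) ≤ Real.log m := by
      calc Real.sqrt (Real.log 2 * Real.log m)
          ≤ Real.sqrt (Real.log m * Real.log m) :=
            Real.sqrt_le_sqrt (mul_le_mul_of_nonneg_right hlm hlm0)
        _ = Real.log m := Real.sqrt_mul_self hlm0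
    have hexp : Real.exp (Real.sqrt (Real.log 2 * Real.log m)) ≤ m := by
      have h1 := Real.exp_le_exp.mpr hsqrt
      rwa [Real.exp_log hm0] at h1
    rw [Real.exp_neg, Nat.cast_one, ← div_eq_mul_inv, le_div_iff₀ (Real.exp_pos _), one_mul]
    exact hexp
  · obtain ⟨t, h3t, hm2, h5⟩ := assembly hsq hgφ hgm hm hm6 hg2
    set h := m / g with hh
    have hgh : g * h = m := Nat.mul_div_cancel' hgm
    have hhR5 : (5:ℝ) ≤ (h:ℝ) := by exact_mod_cast h5
    have hh0 : (0:ℝ) < h := by linarith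
    have hH0 : (0:ℝ) ≤ Real.log h := Real.log_nonneg (by linarith)
    have hm2R : (m:ℝ) ≤ 2 * (h:ℝ)^(t+1) := by exact_mod_cast hm2
    have h3tR : (3:ℝ) * 2^t ≤ (h:ℝ) := by exact_mod_cast h3t
    have hlogm_le : Real.log m ≤ Real.log 2 + ((t:ℝ)+1) * Real.log h := by
      calc Real.log m ≤ Real.log (2 * (h:ℝ)^(t+1)) := Real.log_le_log hm0 hm2R
        _ = Real.log 2 + ((t:ℝ)+1) * Real.log h := by
            rw [Real.log_mul (by norm_num) (by positivity), Real.log_pow]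
            push_cast; ring
    have hlogh_ge : Real.log 3 + (t:ℝ) * Real.log 2 ≤ Real.log h := by
      calc Real.log 3 + (t:ℝ) * Real.log 2 = Real.log ((3:ℝ) * 2^t) := by
            rw [Real.log_mul (by norm_num) (by positivity), Real.log_pow]
        _ ≤ Real.log h := Real.log_le_log (by positivity) h3tR
    have hl32 : (1:ℝ)/3 ≤ Real.log 3 - Real.log 2 := by
      have h1 := Real.log_le_sub_one_of_pos (show (0:ℝ) < 2/3 by norm_num)
      rw [Real.log_div (by norm_num) (by norm_num)] at h1
      linarith
    have hl54 : 2 * Real.log 2 + 1/5 ≤ Real.log 5 := by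
      have h1 := Real.log_le_sub_one_of_pos (show (0:ℝ) < 4/5 by norm_num)
      rw [Real.log_div (by norm_num) (by norm_num)] at h1
      have h4 : Real.log 4 = 2 * Real.log 2 := by
        rw [show (4:ℝ) = 2^2 by norm_num, Real.log_pow]
        push_cast; ring
      linarith
    have hlh5 : Real.log 5 ≤ Real.log h := Real.log_le_log (by norm_num) hhR5
    have hl2u : Real.log 2 < 0.6931471808 := Real.log_two_lt_d9
    have htR0 : (0:ℝ) ≤ (t:ℝ) := Nat.cast_nonneg t
    have hkey : Real.log 2 * Real.log m ≤ (Real.log h)^2 := by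
      have hA : Real.log 2 * Real.log m
          ≤ Real.log 2 * Real.log 2 + ((t:ℝ) * Real.log 2) * Real.log h
            + Real.log 2 * Real.log h := by
        have := mul_le_mul_of_nonneg_left hlogm_le hl2.le
        nlinarith [this]
      have hB : ((t:ℝ) * Real.log 2) * Real.log h
          ≤ (Real.log h - Real.log 3) * Real.log h :=
        mul_le_mul_of_nonneg_right (by linarith) hH0
      have hC : (1/3 : ℝ) * Real.log h ≤ (Real.log 3 - Real.log 2) * Real.log h :=
        mul_le_mul_of_nonneg_right hl32 hH0
      have hD : Real.log 2 * Real.log 2 ≤ 0.6931471808 * Real.log 2 :=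
        mul_le_mul_of_nonneg_right hl2u.le hl2.le
      nlinarith [hA, hB, hC, hD, hlh5, hl54, hl2u, hl2.le, hH0]
    have hsqrtH : Real.sqrt (Real.log 2 * Real.log m) ≤ Real.log h := by
      calc Real.sqrt (Real.log 2 * Real.log m) ≤ Real.sqrt ((Real.log h)^2) :=
            Real.sqrt_le_sqrt hkey
        _ = Real.log h := Real.sqrt_sq hH0
    have hghR : (g:ℝ) * (h:ℝ) = (m:ℝ) := by exact_mod_cast hgh
    have hgeq : (g:ℝ) = (m:ℝ) * (h:ℝ)⁻¹ := by
      field_simp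
      linarith [hghR]
    rw [hgeq]
    have hexpH : Real.exp (-(Real.log h)) = (h:ℝ)⁻¹ := by
      rw [Real.exp_neg, Real.exp_log hh0]
    calc (m:ℝ) * (h:ℝ)⁻¹ = (m:ℝ) * Real.exp (-(Real.log h)) := by rw [hexpH]
      _ ≤ (m:ℝ) * Real.exp (-Real.sqrt (Real.log 2 * Real.log m)) := by
          apply mul_le_mul_of_nonneg_left _ hm0.le
          exact Real.exp_le_exp.mpr (by linarith)
end

section
/- For every positive integer m, d(m) ≤ √2 · m · exp(−√(log 2 · log m + (log 2)²/4)), where d(m) = gcd(m, δ·φ(rad(m))) with δ = 2 if 4 | m and δ = 1 otherwise. -/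
/-! Write `m = d * t` with `d = dFun m`. An odd prime `q ∣ d` divides `δ(m) φ(rad m)`, hence
`q ∣ p - 1` for some prime `p ∣ m`; in particular the largest odd prime of `m` divides `t`.
Charging the odd primes of `d` to such larger primes of `m`, from the top down, and measuring them
with the potential `F u = u ^ 2 / (2 log 2) + u / 2`, which is superadditive and satisfies
`u + F (u - log 2) = F u`, gives `log d ≤ log 2 + F (log t)`. For `t ≥ 4` this implies
`log 2 * log d ≤ (log t) ^ 2`. Otherwise either `m` has no odd prime factor and `d ∣ δ(m)`, or
`t = 3` and `d ∣ 4`, and the inequality is checked directly. Completing the square in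
`log m = log d + log t` turns it into the stated bound. -/

open Real Finset

noncomputable def potential (u : ℝ) : ℝ := u ^ 2 / (2 * log 2) + u / 2

lemma potential_mono {u v : ℝ} (hu : 0 ≤ u) (huv : u ≤ v) : potential u ≤ potential v := by
  unfold potential
  gcongr

lemma potential_add_potential_le {u v : ℝ} (hu : 0 ≤ u) (hv : 0 ≤ v) :
    potential u + potential v ≤ potential (u + v) := by
  unfold potential
  have : u ^ 2 + v ^ 2 ≤ (u + v) ^ 2 := by nlinarith [mul_nonneg hu hv]
  have := div_le_div_of_nonneg_right this (by positivity : 0 ≤ 2 * log 2)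
  rw [add_div] at this
  linarith

lemma sum_potential_le_potential_sum {ι : Type*} (s : Finset ι) {f : ι → ℝ}
    (hf : ∀ i ∈ s, 0 ≤ f i) : ∑ i ∈ s, potential (f i) ≤ potential (∑ i ∈ s, f i) := by
  classical
  induction s using Finset.induction_on with
  | empty => simp [potential]
  | insert a s ha ih =>
    rw [sum_insert ha, sum_insert ha]
    have hs := forall_mem_insert .. |>.mp hf
    grw [ih hs.2]
    exact potential_add_potential_le hs.1 (sum_nonneg hs.2)

lemma add_potential_sub_log_two (u : ℝ) : u + potential (u - log 2) = potential u := by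
  unfold potential
  field_simp
  ring

lemma log_two_mul_le_sq_of_le_potential {x s : ℝ} (hs : 2 * log 2 ≤ s)
    (hx : x ≤ log 2 + potential s) : log 2 * x ≤ s ^ 2 := by
  have hc : 0 < log 2 := log_pos one_lt_two
  have hF : log 2 * (log 2 + potential s) = log 2 ^ 2 + s ^ 2 / 2 + log 2 * s / 2 := by
    unfold potential
    field_simp
    ring
  nlinarith [mul_le_mul_of_nonneg_left hx hc.le, mul_nonneg (by linarith : 0 ≤ s - 2 * log 2)
    (by linarith : 0 ≤ s + log 2)]

lemma log_natCast_prod {s : Finset ℕ} (hs : ∀ p ∈ s, p ≠ 0) :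
    log ((∏ p ∈ s, p : ℕ) : ℝ) = ∑ p ∈ s, log p := by
  push_cast
  exact log_prod fun p hp => Nat.cast_ne_zero.mpr (hs p hp)

lemma two_mul_prod_le_of_dvd_pred {P : ℕ} (hP : P.Prime) {Q : Finset ℕ}
    (hQ : ∀ q ∈ Q, q.Prime) (h2 : 2 ∉ Q) (hdvd : ∀ q ∈ Q, q ∣ P - 1) : 2 * ∏ q ∈ Q, q ≤ P := by
  rcases hP.eq_two_or_odd' with rfl | hodd
  · have : Q = ∅ := eq_empty_of_forall_notMem fun q hq =>
      (hQ q hq).one_lt.ne' (Nat.dvd_one.mp (hdvd q hq))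
    simp [this]
  · have hcop : Nat.Coprime 2 (∏ q ∈ Q, q) := Nat.Coprime.prod_right fun q hq =>
      (Nat.coprime_primes Nat.prime_two (hQ q hq)).mpr (ne_of_mem_of_not_mem hq h2).symm
    have h2P : 2 ∣ P - 1 := (Nat.Odd.sub_odd hodd odd_one).two_dvd
    have := Nat.le_of_dvd (by have := hP.two_le; omega) <|
      hcop.mul_dvd_of_dvd_of_dvd h2P (prod_primes_dvd _ (fun q hq => (hQ q hq).prime) hdvd)
    omega

theorem sum_potential_log_le {T S : Finset ℕ} (hT : ∀ p ∈ T, p.Prime) (hST : S ⊆ T) (h2 : 2 ∉ S)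
    (hS : ∀ q ∈ S, ∃ p ∈ T, q ∣ p - 1) :
    ∑ q ∈ S, potential (log q) ≤ ∑ p ∈ T, potential (log p - log 2) := by
  classical
  induction T using Finset.induction_on_max generalizing S with
  | empty => simp [subset_empty.mp hST]
  | insert P T hlt ih =>
    have hPT : P ∉ T := fun h => (hlt P h).false
    have hTP := forall_mem_insert .. |>.mp hT
    have hPS : P ∉ S := fun hP => by
      obtain ⟨p, hp, hdvd⟩ := hS P hP
      have hpP : p ≤ P := (mem_insert.mp hp).elim le_of_eq fun h => (hlt p h).le
      have hp2 := (hT p hp).two_le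
      have := Nat.le_of_dvd (by omega) hdvd
      omega
    -- The primes of `S` dividing `P - 1` are odd, so their product is at most `P / 2`: their
    -- potentials are paid for by that of `P`, and the others keep their donors in `T`.
    set Q := S.filter (· ∣ P - 1)
    have hQ : log 2 + ∑ q ∈ Q, log q ≤ log P := by
      have hQS : Q ⊆ S := filter_subset _ _
      have hprimes : ∀ q ∈ Q, q.Prime := fun q hq => hT q (hST (hQS hq))
      have hle := two_mul_prod_le_of_dvd_pred hTP.1 hprimes (fun h => h2 (hQS h))
        fun q hq => (mem_filter.mp hq).2
      have hpos : 0 < ∏ q ∈ Q, q := prod_pos fun q hq => (hprimes q hq).pos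
      rw [← log_natCast_prod fun q hq => (hprimes q hq).ne_zero, ← log_mul two_ne_zero
        (by exact_mod_cast hpos.ne')]
      exact log_le_log (by positivity) (by exact_mod_cast hle)
    have hIH := ih hTP.2 (S := S.filter (¬ · ∣ P - 1))
      (fun q hq => (mem_insert.mp (hST (mem_filter.mp hq).1)).resolve_left
        fun h => hPS (h ▸ (mem_filter.mp hq).1))
      (fun h => h2 (mem_filter.mp h).1)
      fun q hq => by
        obtain ⟨p, hp, hdvd⟩ := hS q (mem_filter.mp hq).1
        refine ⟨p, (mem_insert.mp hp).resolve_left ?_, hdvd⟩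
        rintro rfl
        exact (mem_filter.mp hq).2 hdvd
    have hlog : ∀ q ∈ Q, 0 ≤ log (q : ℝ) := fun q _ => log_natCast_nonneg q
    calc ∑ q ∈ S, potential (log q)
        = ∑ q ∈ Q, potential (log q) + ∑ q ∈ S.filter (¬ · ∣ P - 1), potential (log q) :=
          (sum_filter_add_sum_filter_not _ _ _).symm
      _ ≤ potential (∑ q ∈ Q, log q) + ∑ p ∈ T, potential (log p - log 2) :=
          add_le_add (sum_potential_le_potential_sum Q hlog) hIH
      _ ≤ potential (log P - log 2) + ∑ p ∈ T, potential (log p - log 2) := by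
          grw [potential_mono (sum_nonneg hlog)
            (by linarith : ∑ q ∈ Q, log (q : ℝ) ≤ log P - log 2)]
      _ = ∑ p ∈ insert P T, potential (log p - log 2) := by rw [sum_insert hPT]

lemma totient_radN (m : ℕ) : Nat.totient (radN m) = ∏ p ∈ m.primeFactors, (p - 1) := by
  have hr : 0 < radN m := prod_pos fun p hp => (Nat.prime_of_mem_primeFactors hp).pos
  have h := Nat.totient_mul_prod_primeFactors (radN m)
  rw [radN, Nat.primeFactors_prod_primeFactors, ← radN, mul_comm (radN m)] at h
  exact Nat.eq_of_mul_eq_mul_right hr h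

lemma deltaN_dvd_two (m : ℕ) : deltaN m ∣ 2 := by
  unfold deltaN; split_ifs <;> norm_num

lemma dFun_dvd_deltaN_mul_prod (m : ℕ) :
    dFun m ∣ deltaN m * ∏ p ∈ m.primeFactors.erase 2, (p - 1) := by
  rw [prod_erase (f := fun p => p - 1) _ rfl, ← totient_radN]
  exact Nat.gcd_dvd_right _ _

lemma exists_dvd_pred_of_dvd_dFun {m q : ℕ} (hq : q.Prime) (hq2 : q ≠ 2) (hqd : q ∣ dFun m) :
    ∃ p ∈ m.primeFactors.erase 2, q ∣ p - 1 := by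
  have hδ : ¬ q ∣ deltaN m := fun h =>
    hq2 ((Nat.prime_dvd_prime_iff_eq hq Nat.prime_two).mp (h.trans (deltaN_dvd_two m)))
  exact hq.prime.exists_mem_finset_dvd <|
    ((hq.prime.dvd_or_dvd (hqd.trans (dFun_dvd_deltaN_mul_prod m))).resolve_left hδ)

lemma not_dvd_dFun_of_forall_le {m P : ℕ} (hP : P.Prime) (hP2 : P ≠ 2)
    (hmax : ∀ p ∈ m.primeFactors, p ≤ P) : ¬ P ∣ dFun m := fun hPd => by
  obtain ⟨p, hp, hdvd⟩ := exists_dvd_pred_of_dvd_dFun hP hP2 hPd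
  have hp2 := (Nat.prime_of_mem_primeFactors (mem_of_mem_erase hp)).two_le
  have := Nat.le_of_dvd (by omega) hdvd
  have := hmax p (mem_of_mem_erase hp)
  omega

lemma Nat.Prime.dvd_div_of_not_dvd {p d m : ℕ} (hp : p.Prime) (hdm : d ∣ m) (hpm : p ∣ m)
    (hpd : ¬ p ∣ d) : p ∣ m / d := by
  rw [← Nat.mul_div_cancel' hdm] at hpm
  exact (hp.prime.dvd_or_dvd hpm).resolve_left hpd

lemma log_dFun_le_log_two_add_sum_log (m : ℕ) :
    log (dFun m) ≤ log 2 + ∑ p ∈ m.primeFactors.erase 2, log p := by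
  have hT : ∀ p ∈ m.primeFactors.erase 2, p.Prime := fun p hp =>
    Nat.prime_of_mem_primeFactors (mem_of_mem_erase hp)
  have hN : 0 < deltaN m * ∏ p ∈ m.primeFactors.erase 2, (p - 1) :=
    Nat.mul_pos (Nat.pos_of_dvd_of_pos (deltaN_dvd_two m) two_pos)
      (prod_pos fun p hp => Nat.sub_pos_of_lt (hT p hp).one_lt)
  have hle : dFun m ≤ 2 * ∏ p ∈ m.primeFactors.erase 2, p := by
    refine (Nat.le_of_dvd hN (dFun_dvd_deltaN_mul_prod m)).trans ?_
    gcongr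
    exacts [Nat.le_of_dvd two_pos (deltaN_dvd_two m), Nat.sub_le _ _]
  have hprod : 0 < ∏ p ∈ m.primeFactors.erase 2, p := prod_pos fun p hp => (hT p hp).pos
  calc log (dFun m : ℝ) ≤ log ((2 * ∏ p ∈ m.primeFactors.erase 2, p : ℕ) : ℝ) :=
        log_le_log (by exact_mod_cast Nat.pos_of_dvd_of_pos (dFun_dvd_deltaN_mul_prod m) hN)
          (by exact_mod_cast hle)
    _ = log 2 + ∑ p ∈ m.primeFactors.erase 2, log p := by
        rw [Nat.cast_mul, log_mul (by positivity) (by positivity),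
          log_natCast_prod fun p hp => (hT p hp).ne_zero, Nat.cast_ofNat]

lemma log_dFun_le (m : ℕ) (hm : 0 < m) :
    log (dFun m) ≤ log 2 + potential (log (m / dFun m : ℕ)) := by
  set d := dFun m
  have hdm : d ∣ m := Nat.gcd_dvd_left _ _
  have hd : 0 < d := Nat.pos_of_dvd_of_pos hdm hm
  set T := m.primeFactors.erase 2
  set S := d.primeFactors.erase 2
  have hT : ∀ p ∈ T, p.Prime := fun p hp => Nat.prime_of_mem_primeFactors (mem_of_mem_erase hp)
  have hST : S ⊆ T := erase_subset_erase _ (Nat.primeFactors_mono hdm hm.ne')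
  have hsplit : ∀ f : ℕ → ℝ, ∑ p ∈ T \ S, f p + ∑ p ∈ S, f p = ∑ p ∈ T, f p :=
    fun f => sum_sdiff hST
  have hcharge : ∑ q ∈ S, log q ≤ ∑ p ∈ T \ S, potential (log p - log 2) := by
    have := sum_potential_log_le hT hST (notMem_erase 2 _) fun q hq =>
      exists_dvd_pred_of_dvd_dFun (Nat.prime_of_mem_primeFactors (mem_of_mem_erase hq))
        (ne_of_mem_erase hq) (Nat.dvd_of_mem_primeFactors (mem_of_mem_erase hq))
    simp only [← add_potential_sub_log_two (log (_ : ℕ)), sum_add_distrib] at this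
    linarith [hsplit fun p => potential (log p - log 2)]
  have hBt : ∏ p ∈ T \ S, p ∣ m / d :=
    prod_primes_dvd _ (fun p hp => (hT p (sdiff_subset hp)).prime) fun p hp => by
      obtain ⟨hpT, hpS⟩ := mem_sdiff.mp hp
      refine (hT p hpT).dvd_div_of_not_dvd hdm
        (Nat.dvd_of_mem_primeFactors (mem_of_mem_erase hpT)) fun h => hpS ?_
      exact mem_erase.mpr ⟨ne_of_mem_erase hpT, Nat.mem_primeFactors.mpr ⟨hT p hpT, h, hd.ne'⟩⟩
  have hlogB : ∑ p ∈ T \ S, log (p : ℝ) ≤ log (m / d : ℕ) := by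
    rw [← log_natCast_prod fun p hp => (hT p (sdiff_subset hp)).ne_zero]
    exact log_le_log (by exact_mod_cast prod_pos fun p hp => (hT p (sdiff_subset hp)).pos)
      (by exact_mod_cast Nat.le_of_dvd (Nat.div_pos (Nat.le_of_dvd hm hdm) hd) hBt)
  have hlog : ∀ p ∈ T \ S, 0 ≤ log (p : ℝ) := fun p _ => log_natCast_nonneg p
  calc log (d : ℝ) ≤ log 2 + (∑ p ∈ T \ S, log p + ∑ q ∈ S, log q) := by
        rw [hsplit]
        exact log_dFun_le_log_two_add_sum_log m
    _ ≤ log 2 + ∑ p ∈ T \ S, potential (log p) := by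
        simp only [← add_potential_sub_log_two (log (_ : ℕ)), sum_add_distrib]
        linarith
    _ ≤ log 2 + potential (∑ p ∈ T \ S, log p) := by
        grw [sum_potential_le_potential_sum _ hlog]
    _ ≤ log 2 + potential (log (m / d : ℕ)) := by
        grw [potential_mono (sum_nonneg hlog) hlogB]

lemma log_two_mul_log_dFun_le_of_dvd_deltaN {m : ℕ} (hm : 0 < m) (h : dFun m ∣ deltaN m) :
    log 2 * log (dFun m) ≤ log (m / dFun m : ℕ) ^ 2 := by
  rcases (Nat.dvd_prime Nat.prime_two).mp (h.trans (deltaN_dvd_two m)) with hd | hd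
  · simp only [hd, Nat.cast_one, log_one, mul_zero]
    positivity
  · have h4 : 4 ∣ m := by
      by_contra h4
      simp [deltaN, h4, hd] at h
    have ht : 2 ≤ m / 2 := by
      have := Nat.le_of_dvd hm h4
      omega
    have hlog : log 2 ≤ log (m / 2 : ℕ) := log_le_log two_pos (by exact_mod_cast ht)
    rw [hd, Nat.cast_ofNat]
    nlinarith [log_pos one_lt_two]

lemma log_two_mul_log_dFun_le_of_lt_four {m : ℕ} (hm : 0 < m)
    (hT : (m.primeFactors.erase 2).Nonempty) (ht : m / dFun m < 4) :
    log 2 * log (dFun m) ≤ log (m / dFun m : ℕ) ^ 2 := by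
  have hdm : dFun m ∣ m := Nat.gcd_dvd_left _ _
  have hd : 0 < dFun m := Nat.pos_of_dvd_of_pos hdm hm
  set P := (m.primeFactors.erase 2).max' hT
  have hPT := max'_mem _ hT
  have hP := Nat.prime_of_mem_primeFactors (mem_of_mem_erase hPT)
  have hle : ∀ p ∈ m.primeFactors.erase 2, p ≤ P := fun p hp => le_max' _ p hp
  have hPd : ¬ P ∣ dFun m := not_dvd_dFun_of_forall_le hP (ne_of_mem_erase hPT) fun p hp => by
    by_cases hp2 : p = 2
    · exact hp2 ▸ hP.two_le
    · exact hle p (mem_erase.mpr ⟨hp2, hp⟩)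
  have hPt : P ∣ m / dFun m :=
    hP.dvd_div_of_not_dvd hdm (Nat.dvd_of_mem_primeFactors (mem_of_mem_erase hPT)) hPd
  have ht3 : m / dFun m = 3 ∧ P = 3 := by
    have := Nat.le_of_dvd (Nat.div_pos (Nat.le_of_dvd hm hdm) hd) hPt
    have := ne_of_mem_erase hPT
    have := hP.two_le
    omega
  have hT3 : m.primeFactors.erase 2 ⊆ {3} := fun p hp => by
    have := hle p hp
    have := (Nat.prime_of_mem_primeFactors (mem_of_mem_erase hp)).two_le
    have := ne_of_mem_erase hp
    rw [mem_singleton]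
    omega
  have hd4 : dFun m ∣ 4 := (dFun_dvd_deltaN_mul_prod m).trans <|
    mul_dvd_mul (deltaN_dvd_two m) (prod_dvd_prod_of_subset _ _ _ hT3)
  have hlog4 : log 4 = 2 * log 2 := by
    rw [show (4 : ℝ) = 2 ^ 2 by norm_num, log_pow, Nat.cast_ofNat]
  have hlogd : log (dFun m : ℝ) ≤ 2 * log 2 :=
    hlog4 ▸ log_le_log (by exact_mod_cast hd) (by exact_mod_cast Nat.le_of_dvd four_pos hd4)
  have hlog2 : log 2 < 0.7 := log_two_lt_d9.trans (by norm_num)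
  have hlog3 : 1 ≤ log 3 := by
    rw [le_log_iff_exp_le three_pos]
    exact exp_one_lt_d9.le.trans (by norm_num)
  rw [ht3.1, Nat.cast_ofNat]
  nlinarith [log_pos one_lt_two]

theorem log_two_mul_log_dFun_le {m : ℕ} (hm : 0 < m) :
    log 2 * log (dFun m) ≤ log (m / dFun m : ℕ) ^ 2 := by
  rcases (m.primeFactors.erase 2).eq_empty_or_nonempty with hT | hT
  · exact log_two_mul_log_dFun_le_of_dvd_deltaN hm (by simpa [hT] using dFun_dvd_deltaN_mul_prod m)
  rcases lt_or_ge (m / dFun m) 4 with ht | ht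
  · exact log_two_mul_log_dFun_le_of_lt_four hm hT ht
  refine log_two_mul_le_sq_of_le_potential ?_ (log_dFun_le m hm)
  calc 2 * log 2 = log 4 := by rw [show (4 : ℝ) = 2 ^ 2 by norm_num, log_pow, Nat.cast_ofNat]
    _ ≤ log (m / dFun m : ℕ) := log_le_log four_pos (by exact_mod_cast ht)

lemma le_sqrt_two_mul_mul_exp {d t : ℝ} (hd : 0 < d) (ht : 1 ≤ t)
    (h : log 2 * log d ≤ log t ^ 2) :
    d ≤ √2 * (d * t) * exp (-√(log 2 * log (d * t) + log 2 ^ 2 / 4)) := by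
  have hs : 0 ≤ log t := log_nonneg ht
  have hsqrt : √(log 2 * log (d * t) + log 2 ^ 2 / 4) ≤ log t + log 2 / 2 := by
    rw [sqrt_le_left (by positivity), log_mul hd.ne' (by positivity)]
    nlinarith
  have hsqrt2 : √2 = exp (log 2 / 2) := by rw [exp_half, exp_log two_pos]
  calc d = √2 * (d * t) * exp (-(log t + log 2 / 2)) := by
        rw [hsqrt2, neg_add, exp_add, exp_neg, exp_neg, exp_log (by positivity)]
        field_simp
    _ ≤ _ := by gcongr

theorem dFun_upper_bound (m : ℕ) (hm : 0 < m) :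
    (dFun m : ℝ) ≤ Real.sqrt 2 * (m : ℝ) *
      Real.exp (-Real.sqrt (Real.log 2 * Real.log m + (Real.log 2) ^ 2 / 4)) := by
  have hdm : dFun m ∣ m := Nat.gcd_dvd_left _ _
  have hd : 0 < dFun m := Nat.pos_of_dvd_of_pos hdm hm
  have ht : 0 < m / dFun m := Nat.div_pos (Nat.le_of_dvd hm hdm) hd
  have hmdt : (m : ℝ) = dFun m * (m / dFun m : ℕ) := by
    exact_mod_cast (Nat.mul_div_cancel' hdm).symm
  rw [hmdt]
  exact le_sqrt_two_mul_mul_exp (by exact_mod_cast hd) (by exact_mod_cast ht)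
    (log_two_mul_log_dFun_le hm)
end

section
/- Let m > 1 be a squarefree even integer with at least 3 prime factors, with prime factorization m = 2·p₂⋯p_k where 2 < p₂ < ⋯ < p_k. Then gcd(m, φ(m)) ≤ m / (2^(k−2)·p₂). -/
theorem gcd_totient_le_even_squarefree (m : ℕ) (hm : 1 < m) (hsq : Squarefree m)
    (k : ℕ) (hk : 3 ≤ k) (p : Fin k → ℕ) (hp : ∀ i, (p i).Prime)
    (hmono : StrictMono p) (h0 : p ⟨0, by omega⟩ = 2)
    (hfac : m = ∏ i, p i) :
    (Nat.gcd m (Nat.totient m) : ℝ) ≤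
      (m : ℝ) / (2 ^ (k - 2) * (p ⟨1, by omega⟩ : ℝ)) := by
  classical
  have hm0 : m ≠ 0 := by omega
  set p2 := p ⟨1, by omega⟩ with hp2def
  set P := m.primeFactors with hPdef
  -- P is image of p
  have hP : P = Finset.image p Finset.univ := by
    ext q
    simp only [hPdef, Nat.mem_primeFactors, Finset.mem_image, Finset.mem_univ, true_and]
    constructor
    · rintro ⟨hq, hdvd, -⟩
      rw [hfac] at hdvd
      obtain ⟨i, -, hi⟩ := hq.prime.exists_mem_finset_dvd hdvd
      exact ⟨i, ((Nat.prime_dvd_prime_iff_eq hq (hp i)).mp hi).symm⟩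
    · rintro ⟨i, rfl⟩
      exact ⟨hp i, hfac ▸ Finset.dvd_prod_of_mem p (Finset.mem_univ i), hm0⟩
  have hPprime : ∀ q ∈ P, q.Prime := fun q hq => Nat.prime_of_mem_primeFactors hq
  have hcard : P.card = k := by
    rw [hP, Finset.card_image_of_injective _ hmono.injective, Finset.card_univ, Fintype.card_fin]
  have h2P : (2 : ℕ) ∈ P := by
    rw [hP]; exact Finset.mem_image.mpr ⟨⟨0, by omega⟩, Finset.mem_univ _, h0⟩
  have hp2_3 : 3 ≤ p2 := by
    have h12 : p ⟨0, by omega⟩ < p2 := hmono (by simp [Fin.lt_def])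
    rw [h0] at h12
    exact h12
  have hp2P : p2 ∈ P := by
    rw [hP]; exact Finset.mem_image.mpr ⟨⟨1, by omega⟩, Finset.mem_univ _, rfl⟩
  -- every prime factor other than 2 is ≥ p2
  have hmin : ∀ q ∈ P.erase 2, p2 ≤ q := by
    intro q hq
    obtain ⟨hne, hqP⟩ := Finset.mem_erase.mp hq
    rw [hP] at hqP
    obtain ⟨i, -, rfl⟩ := Finset.mem_image.mp hqP
    have hi0 : i ≠ ⟨0, by omega⟩ := by rintro rfl; exact hne h0
    have : (⟨1, by omega⟩ : Fin k) ≤ i := by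
      rw [Fin.le_def]; simp only
      rcases Nat.eq_or_lt_of_le (Nat.zero_le i.val) with h | h
      · exact absurd (Fin.ext h.symm) hi0
      · omega
    exact hmono.monotone this
  -- m as product over P
  have hmprod : m = ∏ q ∈ P, q := (Nat.prod_primeFactors_of_squarefree hsq).symm
  -- totient formula
  have htot : Nat.totient m = ∏ q ∈ P, (q - 1) := by
    have h := Nat.totient_mul_prod_primeFactors m
    rw [← hPdef, ← hmprod] at h
    have hm1 : 0 < m := by omega
    exact Nat.eq_of_mul_eq_mul_right hm1 (by rw [h, mul_comm])
  -- S : odd prime factors dividing totient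
  set S := (P.erase 2).filter (fun q => q ∣ Nat.totient m) with hSdef
  have hSsub : S ⊆ P.erase 2 := Finset.filter_subset _ _
  -- witness function
  have hwit : ∀ q ∈ S, ∃ r, r ∈ P ∧ q < r ∧ q ∣ r - 1 := by
    intro q hq
    have hqe := hSsub hq
    have hq2 : q ≠ 2 := (Finset.mem_erase.mp hqe).1
    have hqP : q ∈ P := (Finset.mem_erase.mp hqe).2
    have hqprime := hPprime q hqP
    have hqdvd : q ∣ Nat.totient m := (Finset.mem_filter.mp hq).2
    rw [htot] at hqdvd
    obtain ⟨r, hrP, hrd⟩ := hqprime.prime.exists_mem_finset_dvd hqdvd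
    have hrprime := hPprime r hrP
    have hr1 : 0 < r - 1 := by have := hrprime.two_le; omega
    have hle : q ≤ r - 1 := Nat.le_of_dvd hr1 hrd
    exact ⟨r, hrP, by omega, hrd⟩
  choose! f hf1 hf2 hf3 using hwit
  set R := S.image f with hRdef
  have hmapsto : ∀ q ∈ S, f q ∈ R := fun q hq => Finset.mem_image_of_mem f hq
  -- each element of S is ≥ p2, odd prime
  have hSfacts : ∀ q ∈ S, q.Prime ∧ q ≠ 2 ∧ p2 ≤ q := by
    intro q hq
    have hqe := hSsub hq
    exact ⟨hPprime q (Finset.mem_erase.mp hqe).2, (Finset.mem_erase.mp hqe).1, hmin q hqe⟩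
  -- R avoids 2 and p2
  have hRsub : R ⊆ (P.erase 2).erase p2 := by
    intro r hr
    obtain ⟨q, hq, rfl⟩ := Finset.mem_image.mp hr
    obtain ⟨hqprime, hq2, hqp2⟩ := hSfacts q hq
    have hlt : q < f q := hf2 q hq
    refine Finset.mem_erase.mpr ⟨by omega, Finset.mem_erase.mpr ⟨?_, hf1 q hq⟩⟩
    have := hqprime.two_le; omega
  -- fiberwise inequality
  have hfiber : ∀ r ∈ R, 2 * ∏ q ∈ S.filter (fun q => f q = r), q ≤ r := by
    intro r hr
    obtain ⟨q0, hq0, rfl⟩ := Finset.mem_image.mp hr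
    set r := f q0
    have hrP : r ∈ P := hf1 q0 hq0
    have hrprime := hPprime r hrP
    have hr2 : r ≠ 2 := by
      have := hf2 q0 hq0
      have := (hSfacts q0 hq0).2.2
      omega
    have hrodd : ¬ (2 ∣ r) := by
      intro h2
      exact hr2 ((Nat.prime_dvd_prime_iff_eq Nat.prime_two hrprime).mp h2).symm
    have h2r1 : 2 ∣ r - 1 := by
      rcases Nat.even_or_odd r with he | ho
      · exact absurd he.two_dvd hrodd
      · obtain ⟨c, hc⟩ := ho; omega
    have h2notmem : (2:ℕ) ∉ S.filter (fun q => f q = r) := by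
      intro h2
      exact (hSfacts 2 (Finset.mem_filter.mp h2).1).2.1 rfl
    have hdvd : (∏ q ∈ insert 2 (S.filter (fun q => f q = r)), q) ∣ r - 1 := by
      apply Finset.prod_primes_dvd
      · intro a ha
        rcases Finset.mem_insert.mp ha with rfl | ha'
        · exact Nat.prime_iff.mp Nat.prime_two
        · exact Nat.prime_iff.mp (hSfacts a (Finset.mem_filter.mp ha').1).1
      · intro a ha
        rcases Finset.mem_insert.mp ha with rfl | ha'
        · exact h2r1
        · obtain ⟨haS, hafr⟩ := Finset.mem_filter.mp ha'
          exact hafr ▸ hf3 a haS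
    rw [Finset.prod_insert h2notmem] at hdvd
    have : 2 * ∏ q ∈ S.filter (fun q => f q = r), q ≤ r - 1 :=
      Nat.le_of_dvd (by have := hrprime.two_le; omega) hdvd
    omega
  -- global product inequality over fibers
  have hglobal : 2 ^ R.card * ∏ q ∈ S, q ≤ ∏ r ∈ R, r := by
    calc 2 ^ R.card * ∏ q ∈ S, q
        = ∏ r ∈ R, (2 * ∏ q ∈ S.filter (fun q => f q = r), q) := by
          rw [Finset.prod_mul_distrib, Finset.prod_const,
            Finset.prod_fiberwise_of_maps_to hmapsto]
      _ ≤ ∏ r ∈ R, r := Finset.prod_le_prod' hfiber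
  -- cancel the common part S ∩ R
  have hSsplit : (∏ q ∈ S ∩ R, q) * ∏ q ∈ S \ R, q = ∏ q ∈ S, q :=
    Finset.prod_inter_mul_prod_diff S R _
  have hRsplit : (∏ q ∈ R ∩ S, q) * ∏ q ∈ R \ S, q = ∏ q ∈ R, q :=
    Finset.prod_inter_mul_prod_diff R S _
  have hposSR : 0 < ∏ q ∈ S ∩ R, q := by
    apply Finset.prod_pos
    intro q hq
    exact ((hSfacts q (Finset.mem_inter.mp hq).1).1).pos
  have hcancel : 2 ^ R.card * ∏ q ∈ S \ R, q ≤ ∏ q ∈ R \ S, q := by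
    have h1 : (∏ q ∈ S ∩ R, q) * (2 ^ R.card * ∏ q ∈ S \ R, q) ≤
        (∏ q ∈ S ∩ R, q) * ∏ q ∈ R \ S, q := by
      rw [Finset.inter_comm S R] at hSsplit ⊢
      calc (∏ q ∈ R ∩ S, q) * (2 ^ R.card * ∏ q ∈ S \ R, q)
          = 2 ^ R.card * ((∏ q ∈ R ∩ S, q) * ∏ q ∈ S \ R, q) := by ring
        _ = 2 ^ R.card * ∏ q ∈ S, q := by rw [hSsplit]
        _ ≤ ∏ r ∈ R, r := hglobal
        _ = (∏ q ∈ R ∩ S, q) * ∏ q ∈ R \ S, q := hRsplit.symm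
    exact Nat.le_of_mul_le_mul_left h1 hposSR
  -- define T
  set T := (P.erase 2) \ S with hTdef
  have hRT : R \ S ⊆ T := by
    intro r hr
    obtain ⟨hrR, hrS⟩ := Finset.mem_sdiff.mp hr
    exact Finset.mem_sdiff.mpr ⟨Finset.mem_of_mem_erase (hRsub hrR), hrS⟩
  have hTsplit : (∏ q ∈ T \ (R \ S), q) * ∏ q ∈ R \ S, q = ∏ q ∈ T, q :=
    Finset.prod_sdiff hRT
  -- lower bounds by p2 powers
  have hSRlow : p2 ^ (S \ R).card ≤ ∏ q ∈ S \ R, q := by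
    apply Finset.pow_card_le_prod
    intro q hq
    exact (hSfacts q (Finset.mem_sdiff.mp hq).1).2.2
  have hTRlow : p2 ^ (T \ (R \ S)).card ≤ ∏ q ∈ T \ (R \ S), q := by
    apply Finset.pow_card_le_prod
    intro q hq
    exact hmin q (Finset.mem_sdiff.mp (Finset.mem_sdiff.mp hq).1).1
  -- cardinalities
  have hcard_erase : (P.erase 2).card = k - 1 := by
    rw [Finset.card_erase_of_mem h2P, hcard]
  have hc1 : (S \ R).card + (S ∩ R).card = S.card := Finset.card_sdiff_add_card_inter S R
  have hc2 : (R \ S).card + (R ∩ S).card = R.card := Finset.card_sdiff_add_card_inter R S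
  have hc3 : (S ∩ R).card = (R ∩ S).card := by rw [Finset.inter_comm]
  have hc4 : T.card + S.card = k - 1 := by
    rw [hTdef, Finset.card_sdiff_add_card_eq_card hSsub, hcard_erase]
  have hc5 : (T \ (R \ S)).card + (R \ S).card = T.card :=
    Finset.card_sdiff_add_card_eq_card hRT
  have hc6 : R.card ≤ k - 2 := by
    have h1 : R.card ≤ ((P.erase 2).erase p2).card := Finset.card_le_card hRsub
    have h2 : ((P.erase 2).erase p2).card = k - 2 := by
      rw [Finset.card_erase_of_mem (Finset.mem_erase.mpr ⟨by omega, hp2P⟩), hcard_erase]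
      omega
    omega
  -- the key bound on ∏ T
  have hTbound : 2 ^ (k - 2) * p2 ≤ ∏ q ∈ T, q := by
    set a := (S \ R).card
    set b := (T \ (R \ S)).card
    set c := R.card
    have hab1 : 1 ≤ a + b := by omega
    obtain ⟨e, he⟩ : ∃ e, a + b = e + 1 := ⟨a + b - 1, by omega⟩
    have hce : c + e = k - 2 := by omega
    calc 2 ^ (k - 2) * p2 = 2 ^ c * (p2 * 2 ^ e) := by rw [← hce]; ring
      _ ≤ 2 ^ c * (p2 * p2 ^ e) := by
          apply Nat.mul_le_mul_left
          apply Nat.mul_le_mul_left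
          exact Nat.pow_le_pow_left (by omega) e
      _ = 2 ^ c * p2 ^ (a + b) := by rw [he, pow_succ, mul_comm (p2 ^ e) p2]
      _ = p2 ^ b * (2 ^ c * p2 ^ a) := by rw [pow_add]; ring
      _ ≤ p2 ^ b * (2 ^ c * ∏ q ∈ S \ R, q) := by
          apply Nat.mul_le_mul_left
          exact Nat.mul_le_mul_left _ hSRlow
      _ ≤ p2 ^ b * ∏ q ∈ R \ S, q := Nat.mul_le_mul_left _ hcancel
      _ ≤ (∏ q ∈ T \ (R \ S), q) * ∏ q ∈ R \ S, q := Nat.mul_le_mul_right _ hTRlow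
      _ = ∏ q ∈ T, q := hTsplit
  -- bound on the gcd
  set d := Nat.gcd m (Nat.totient m) with hddef
  have hdsq : Squarefree d := hsq.squarefree_of_dvd (Nat.gcd_dvd_left _ _)
  have hdsub : d.primeFactors ⊆ insert 2 S := by
    intro q hq
    obtain ⟨hqprime, hqd, -⟩ := Nat.mem_primeFactors.mp hq
    have hqm : q ∣ m := hqd.trans (Nat.gcd_dvd_left _ _)
    have hqt : q ∣ Nat.totient m := hqd.trans (Nat.gcd_dvd_right _ _)
    have hqP : q ∈ P := Nat.mem_primeFactors.mpr ⟨hqprime, hqm, hm0⟩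
    by_cases hq2 : q = 2
    · exact Finset.mem_insert.mpr (Or.inl hq2)
    · exact Finset.mem_insert.mpr (Or.inr (Finset.mem_filter.mpr
        ⟨Finset.mem_erase.mpr ⟨hq2, hqP⟩, hqt⟩))
  have h2S : (2:ℕ) ∉ S := fun h => (hSfacts 2 h).2.1 rfl
  have hddvd : d ∣ 2 * ∏ q ∈ S, q := by
    have h1 : d = ∏ q ∈ d.primeFactors, q := (Nat.prod_primeFactors_of_squarefree hdsq).symm
    have h2 : (∏ q ∈ d.primeFactors, q) ∣ ∏ q ∈ insert 2 S, q :=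
      Finset.prod_dvd_prod_of_subset _ _ _ hdsub
    rw [Finset.prod_insert h2S] at h2
    exact h1 ▸ h2
  have hSpos : 0 < ∏ q ∈ S, q := Finset.prod_pos (fun q hq => (hSfacts q hq).1.pos)
  have hdle : d ≤ 2 * ∏ q ∈ S, q := Nat.le_of_dvd (by positivity) hddvd
  -- m = 2 * ∏ S * ∏ T
  have hmST : m = 2 * ((∏ q ∈ S, q) * ∏ q ∈ T, q) := by
    rw [hmprod, ← Finset.mul_prod_erase P _ h2P]
    congr 1
    rw [hTdef, mul_comm]
    exact (Finset.prod_sdiff hSsub).symm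
  -- final natural number inequality
  have hnat : d * (2 ^ (k - 2) * p2) ≤ m := by
    calc d * (2 ^ (k - 2) * p2) ≤ (2 * ∏ q ∈ S, q) * ∏ q ∈ T, q :=
          Nat.mul_le_mul hdle hTbound
      _ = m := by rw [hmST]; ring
  -- pass to real numbers
  have hdenpos : (0:ℝ) < 2 ^ (k - 2) * (p2 : ℝ) := by positivity
  rw [le_div_iff₀ hdenpos]
  calc (d : ℝ) * (2 ^ (k - 2) * (p2:ℝ)) = ((d * (2 ^ (k - 2) * p2) : ℕ) : ℝ) := by push_cast; ring
    _ ≤ (m : ℝ) := Nat.cast_le.mpr hnat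
end

section
/- Let n be an odd integer with n > 1. Then there is no positive integer m with f(m) = n and d(m) = 2n. -/
lemma dvd_radN {m q : ℕ} (hq : q.Prime) (hm0 : m ≠ 0) (h : q ∣ m) : q ∣ radN m :=
  Finset.dvd_prod_of_mem (fun p => p) (Nat.mem_primeFactors.mpr ⟨hq, h, hm0⟩)

lemma radN_pos (m : ℕ) : 0 < radN m :=
  Finset.prod_pos fun _ hp => (Nat.prime_of_mem_primeFactors hp).pos

lemma totient_radN_mul {m : ℕ} (hm0 : m ≠ 0) :
    Nat.totient m * radN m = m * Nat.totient (radN m) := by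
  have hps : ∀ p ∈ m.primeFactors, p.Prime := fun p hp => Nat.prime_of_mem_primeFactors hp
  have hpf : (radN m).primeFactors = m.primeFactors := Nat.primeFactors_prod hps
  have h1 := Nat.totient_mul_prod_primeFactors m
  have h2 := Nat.totient_mul_prod_primeFactors (radN m)
  rw [hpf] at h2
  have hrad0 : 0 < radN m := radN_pos m
  have h3 : Nat.totient (radN m) = ∏ p ∈ m.primeFactors, (p - 1) := by
    have hh : radN m * Nat.totient (radN m) = radN m * ∏ p ∈ m.primeFactors, (p - 1) := by
      rw [← h2]; unfold radN; ring
    exact Nat.eq_of_mul_eq_mul_left hrad0 hh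
  rw [h3]
  exact h1

lemma two_dvd_carmichael {m : ℕ} (hm : 2 < m) : 2 ∣ carmichael m := by
  haveI : NeZero m := ⟨by omega⟩
  haveI : Fact (2 < m) := ⟨hm⟩
  have h1 : (-1 : (ZMod m)ˣ) ≠ 1 := by
    intro h
    have h' := congrArg Units.val h
    rw [Units.val_neg, Units.val_one] at h'
    exact ZMod.neg_one_ne_one h'
  have h2 : (-1 : (ZMod m)ˣ) ^ 2 = 1 := by
    rw [sq, neg_one_mul, neg_neg]
  have h3 : orderOf (-1 : (ZMod m)ˣ) = 2 := orderOf_eq_prime h2 h1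
  exact h3 ▸ Monoid.order_dvd_exponent (-1 : (ZMod m)ˣ)

lemma key_val {m q : ℕ} (hm0 : m ≠ 0) (hq : q.Prime) (hq2 : q ≠ 2) :
    m.factorization q ≤ (carmichael m).factorization q + 1 := by
  haveI : NeZero m := ⟨hm0⟩
  have hlam0 : carmichael m ≠ 0 := Monoid.exponent_ne_zero_of_finite
  set e := m.factorization q with he
  set lam := carmichael m with hlam
  have hqe : q ^ e ∣ m := Nat.ordProj_dvd m q
  have hdvd : Monoid.exponent (ZMod (q ^ e))ˣ ∣ lam :=
    MonoidHom.exponent_dvd (ZMod.unitsMap_surjective hqe)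
  have hcop : Nat.Coprime (1 + q) (q ^ e) :=
    Nat.Coprime.pow_right _ ((Nat.coprime_add_self_left).mpr (Nat.coprime_one_left q))
  set u : (ZMod (q ^ e))ˣ := ZMod.unitOfCoprime _ hcop with hu
  have hupow : u ^ lam = 1 := by
    obtain ⟨k, hk⟩ := hdvd
    rw [hk, pow_mul, Monoid.pow_exponent_eq_one, one_pow]
  have hcast : (((1 + q) ^ lam : ℕ) : ZMod (q ^ e)) = 1 := by
    have h' := congrArg Units.val hupow
    rw [Units.val_pow_eq_pow_val, Units.val_one] at h'
    rw [hu] at h'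
    rw [ZMod.coe_unitOfCoprime] at h'
    push_cast
    push_cast at h'
    exact h'
  have hone_le : 1 ≤ (1 + q) ^ lam := Nat.one_le_pow _ _ (by omega)
  have hdvdD : q ^ e ∣ (1 + q) ^ lam - 1 := by
    have hz : (((1 + q) ^ lam - 1 : ℕ) : ZMod (q ^ e)) = 0 := by
      rw [Nat.cast_sub hone_le, hcast, Nat.cast_one, sub_self]
    exact (ZMod.natCast_eq_zero_iff _ _).mp hz
  have hD0 : (1 + q) ^ lam - 1 ≠ 0 := by
    have h1 : 1 < (1 + q) ^ lam := Nat.one_lt_pow hlam0 (by have := hq.two_le; omega)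
    omega
  have hle : e ≤ ((1 + q) ^ lam - 1).factorization q :=
    (Nat.Prime.pow_dvd_iff_le_factorization hq hD0).mp hdvdD
  haveI : Fact q.Prime := ⟨hq⟩
  have hqnd : ¬ q ∣ 1 + q := by
    intro h
    have h1 : q ∣ (1 + q) - q := Nat.dvd_sub h (dvd_refl q)
    rw [Nat.add_sub_cancel] at h1
    have h2 := Nat.le_of_dvd one_pos h1
    have := hq.two_le
    omega
  have hlte : padicValNat q ((1 + q) ^ lam - 1 ^ lam) =
      padicValNat q ((1 + q) - 1) + padicValNat q lam :=
    padicValNat.pow_sub_pow (hq.odd_of_ne_two hq2) (by have := hq.two_le; omega)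
      (by simp) hqnd hlam0
  rw [one_pow] at hlte
  rw [show (1 + q) - 1 = q by omega, padicValNat.self hq.one_lt] at hlte
  rw [Nat.factorization_def _ hq] at hle
  rw [Nat.factorization_def _ hq]
  omega

theorem no_pair_n_two_n (n : ℕ) (hodd : Odd n) (hn : 1 < n) :
    ¬ ∃ m : ℕ, 0 < m ∧ fFun m = n ∧ dFun m = 2 * n := by
  rintro ⟨m, hm, hf, hd⟩
  have hm0 : m ≠ 0 := hm.ne'
  have hodd' : n % 2 = 1 := Nat.odd_iff.mp hodd
  have hnm : n ∣ m := hf ▸ Nat.gcd_dvd_left _ _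
  have h2nm : 2 * n ∣ m := hd ▸ Nat.gcd_dvd_left _ _
  have h2m : 2 ∣ m := dvd_trans (Dvd.intro n rfl) h2nm
  have h2nlem : 2 * n ≤ m := Nat.le_of_dvd hm h2nm
  have h2ltm : 2 < m := by omega
  set p := n.minFac with hpdef
  have hp : p.Prime := Nat.minFac_prime (by omega)
  have hpn : p ∣ n := Nat.minFac_dvd n
  have hp2 : p ≠ 2 := by
    intro h
    obtain ⟨t, ht⟩ := hpn
    rw [h] at ht
    omega
  have hp3 : 3 ≤ p := by have := hp.two_le; omega
  have hpm : p ∣ m := hpn.trans hnm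
  have hprad : p ∣ radN m := dvd_radN hp hm0 hpm
  have hrad0 : 0 < radN m := radN_pos m
  have h2rad : 2 < radN m := by
    have := Nat.le_of_dvd hrad0 hprad
    omega
  have hphie : 2 ∣ Nat.totient (radN m) := (Nat.totient_even h2rad).two_dvd
  by_cases h4 : 4 ∣ m
  · have hδ2 : deltaN m = 2 := if_pos h4
    have h4d : 4 ∣ dFun m := by
      refine Nat.dvd_gcd h4 ?_
      rw [hδ2]
      obtain ⟨t, ht⟩ := hphie
      exact ⟨t, by omega⟩
    rw [hd] at h4d
    omega
  · have hδ1 : deltaN m = 1 := if_neg h4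
    have hlam0 : carmichael m ≠ 0 := by
      haveI : NeZero m := ⟨hm0⟩
      exact Monoid.exponent_ne_zero_of_finite
    have h2lam : 2 ∣ carmichael m := two_dvd_carmichael h2ltm
    have h2radd : 2 ∣ radN m := dvd_radN Nat.prime_two hm0 h2m
    -- key divisibility
    have hC : 2 * m ∣ carmichael m * radN m := by
      rw [← Nat.factorization_le_iff_dvd (by omega) (Nat.mul_ne_zero hlam0 hrad0.ne')]
      rw [Nat.factorization_mul two_ne_zero hm0, Nat.factorization_mul hlam0 hrad0.ne']
      rw [Finsupp.le_def]
      intro q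
      simp only [Finsupp.coe_add, Pi.add_apply]
      by_cases hq : q.Prime
      · by_cases hq2 : q = 2
        · subst hq2
          have h2f : (2:ℕ).factorization 2 = 1 := Nat.Prime.factorization_self Nat.prime_two
          have hm2 : m.factorization 2 ≤ 1 := by
            by_contra hcon
            push_neg at hcon
            have : (2:ℕ) ^ 2 ∣ m :=
              (Nat.Prime.pow_dvd_iff_le_factorization Nat.prime_two hm0).mpr (by omega)
            norm_num at this
            exact h4 this
          have hl2 : 1 ≤ (carmichael m).factorization 2 :=
            Nat.Prime.factorization_pos_of_dvd Nat.prime_two hlam0 h2lam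
          have hr2 : 1 ≤ (radN m).factorization 2 :=
            Nat.Prime.factorization_pos_of_dvd Nat.prime_two hrad0.ne' h2radd
          omega
        · have h2f : (2:ℕ).factorization q = 0 := by
            apply Nat.factorization_eq_zero_of_not_dvd
            intro hcon
            exact hq2 ((Nat.prime_dvd_prime_iff_eq hq Nat.prime_two).mp hcon)
          by_cases hqm : q ∣ m
          · have hkey := key_val hm0 hq hq2
            have hr : 1 ≤ (radN m).factorization q :=
              Nat.Prime.factorization_pos_of_dvd hq hrad0.ne' (dvd_radN hq hm0 hqm)
            omega
          · have hz : m.factorization q = 0 := Nat.factorization_eq_zero_of_not_dvd hqm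
            omega
      · simp [Nat.factorization_eq_zero_of_not_prime _ hq]
    -- translate to totients
    have hE : 2 * Nat.totient m ∣ carmichael m * Nat.totient (radN m) := by
      have hmul := mul_dvd_mul_right hC (Nat.totient (radN m))
      rw [show 2 * m * Nat.totient (radN m) = 2 * Nat.totient m * radN m by
        rw [mul_assoc, ← totient_radN_mul hm0]; ring] at hmul
      rw [show carmichael m * radN m * Nat.totient (radN m)
          = carmichael m * Nat.totient (radN m) * radN m by ring] at hmul
      exact (mul_dvd_mul_iff_right (by exact_mod_cast hrad0.ne' : (radN m : ℕ) ≠ 0)).mp hmul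
    have h2f : 2 ∣ fFun m := by
      obtain ⟨k, hk⟩ := hE
      have hφ0 : 0 < Nat.totient m := Nat.totient_pos.mpr hm
      have hg : deltaN m * carmichael m * Nat.totient (radN m) / Nat.totient m = 2 * k := by
        rw [hδ1, one_mul, hk, show 2 * Nat.totient m * k = Nat.totient m * (2 * k) by ring]
        exact Nat.mul_div_cancel_left _ hφ0
      unfold fFun
      rw [hg]
      exact Nat.dvd_gcd h2m ⟨k, rfl⟩
    rw [hf] at h2f
    omega
end

section
/- Let p < q be odd primes with p | q − 1 and p² ∤ q − 1. Let ℓ be an odd prime with ℓ ≡ 1 + q (mod pq). Then for m = p²·q·ℓ we have f(m) = q and d(m) = pq. -/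
lemma carmichael_mul {m n : ℕ} (h : m.Coprime n) :
    carmichael (m * n) = lcm (carmichael m) (carmichael n) := by
  unfold carmichael
  rw [Monoid.exponent_eq_of_mulEquiv
    ((Units.mapEquiv (ZMod.chineseRemainder h).toMulEquiv).trans MulEquiv.prodUnits),
    Monoid.exponent_prod]

lemma carmichael_prime {q : ℕ} (hq : q.Prime) : carmichael q = q - 1 := by
  haveI : Fact q.Prime := ⟨hq⟩
  unfold carmichael
  rw [IsCyclic.exponent_eq_card, Nat.card_eq_fintype_card, ZMod.card_units_eq_totient,
    Nat.totient_prime hq]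

lemma carmichael_sq_dvd {p : ℕ} (hp : p.Prime) : carmichael (p ^ 2) ∣ p * (p - 1) := by
  haveI : NeZero (p ^ 2) := ⟨pow_ne_zero 2 hp.pos.ne'⟩
  have h1 : carmichael (p ^ 2) ∣ Fintype.card (ZMod (p ^ 2))ˣ := Group.exponent_dvd_card
  rwa [ZMod.card_units_eq_totient, Nat.totient_prime_pow hp (by norm_num : 0 < 2),
    show 2 - 1 = 1 from rfl, pow_one] at h1

lemma pow_dvd_lcm_iff {p k a b : ℕ} (hp : p.Prime) (ha : a ≠ 0) (hb : b ≠ 0) :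
    p ^ k ∣ lcm a b ↔ p ^ k ∣ a ∨ p ^ k ∣ b := by
  rw [lcm_eq_nat_lcm, hp.pow_dvd_iff_le_factorization (Nat.lcm_ne_zero ha hb),
    Nat.factorization_lcm ha hb, Finsupp.sup_apply, le_sup_iff,
    ← hp.pow_dvd_iff_le_factorization ha, ← hp.pow_dvd_iff_le_factorization hb]

theorem pair_q_pq (p q ℓ : ℕ) (hp : p.Prime) (hq : q.Prime) (hl : ℓ.Prime)
    (hpodd : Odd p) (hqodd : Odd q) (hlodd : Odd ℓ)
    (hpq : p < q) (hdvd : p ∣ q - 1) (hndvd : ¬ p ^ 2 ∣ q - 1)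
    (hcong : ℓ ≡ 1 + q [MOD p * q]) :
    fFun (p ^ 2 * q * ℓ) = q ∧ dFun (p ^ 2 * q * ℓ) = p * q := by
  have hp3 : 3 ≤ p := by
    have := hp.two_le; have := Nat.odd_iff.mp hpodd; omega
  have hq3 : 3 ≤ q := by omega
  have hl2 : 2 ≤ ℓ := hl.two_le
  -- congruence consequences
  have h1 : ℓ - 1 ≡ q [MOD p * q] := by
    have h := hcong
    rw [show ℓ = (ℓ - 1) + 1 by omega, show 1 + q = q + 1 by omega] at h
    exact Nat.ModEq.add_right_cancel' 1 h
  have hql : q ∣ ℓ - 1 := by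
    have h2 : ℓ - 1 ≡ q [MOD q] := h1.of_dvd (dvd_mul_left q p)
    have h3 : (ℓ - 1) % q = q % q := h2
    rw [Nat.mod_self] at h3
    exact Nat.dvd_of_mod_eq_zero h3
  have hpneq : p ≠ q := hpq.ne
  have hpq_cop : Nat.Coprime p q := (Nat.coprime_primes hp hq).mpr hpneq
  have hpl : ¬ p ∣ ℓ - 1 := by
    intro h
    have h2 : ℓ - 1 ≡ q [MOD p] := h1.of_dvd (dvd_mul_right p q)
    have h3 : (ℓ - 1) % p = q % p := h2
    have h0 : (ℓ - 1) % p = 0 := Nat.mod_eq_zero_of_dvd h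
    have h4 : p ∣ q := Nat.dvd_of_mod_eq_zero (by omega)
    rcases (hq.eq_one_or_self_of_dvd p h4) with h5 | h5 <;> omega
  -- ℓ is larger than q
  have hlq : q < ℓ := by
    have h2 : q ≤ ℓ - 1 := Nat.le_of_dvd (by omega) hql
    have h3 : ℓ - 1 ≠ q := by
      intro h
      have : Even (ℓ - 1) := Nat.Odd.sub_odd hlodd odd_one
      rw [h] at this
      exact (Nat.not_even_iff_odd.mpr hqodd) this
    omega
  have hpl' : p ≠ ℓ := by omega
  have hql' : q ≠ ℓ := by omega
  have hpl_cop : Nat.Coprime p ℓ := (Nat.coprime_primes hp hl).mpr hpl'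
  have hql_cop : Nat.Coprime q ℓ := (Nat.coprime_primes hq hl).mpr hql'
  -- the modulus and its pieces
  have hm0 : p ^ 2 * q * ℓ ≠ 0 := by positivity
  have hcop1 : Nat.Coprime (p ^ 2) q := Nat.Coprime.pow_left 2 hpq_cop
  have hcop2 : Nat.Coprime (p ^ 2 * q) ℓ :=
    Nat.Coprime.mul (Nat.Coprime.pow_left 2 hpl_cop) hql_cop
  -- carmichael
  have hcm : carmichael (p ^ 2 * q * ℓ) =
      lcm (lcm (carmichael (p ^ 2)) (q - 1)) (ℓ - 1) := by
    rw [carmichael_mul hcop2, carmichael_mul hcop1, carmichael_prime hq, carmichael_prime hl]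
  set lam := carmichael (p ^ 2 * q * ℓ) with hlam
  have hq1dvd : (q - 1) ∣ lam := by
    rw [hcm]; exact (dvd_lcm_right _ _).trans (dvd_lcm_left _ _)
  have hl1dvd : (ℓ - 1) ∣ lam := by rw [hcm]; exact dvd_lcm_right _ _
  have hpdvd : p ∣ lam := hdvd.trans hq1dvd
  have hqdvd : q ∣ lam := hql.trans hl1dvd
  have hpp0 : p * (p - 1) ≠ 0 := Nat.mul_ne_zero (by omega) (by omega)
  have hq10 : q - 1 ≠ 0 := by omega
  have hl10 : ℓ - 1 ≠ 0 := by omega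
  -- λ divides L
  have hlamL : lam ∣ lcm (lcm (p * (p - 1)) (q - 1)) (ℓ - 1) := by
    rw [hcm]
    exact lcm_dvd_lcm (lcm_dvd_lcm (carmichael_sq_dvd hp) dvd_rfl) dvd_rfl
  -- p^2 does not divide L
  have hnp2L : ¬ p ^ 2 ∣ lcm (lcm (p * (p - 1)) (q - 1)) (ℓ - 1) := by
    rw [pow_dvd_lcm_iff hp (by rw [lcm_eq_nat_lcm]; exact Nat.lcm_ne_zero hpp0 hq10) hl10,
      pow_dvd_lcm_iff hp hpp0 hq10]
    push_neg
    refine ⟨⟨?_, hndvd⟩, ?_⟩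
    · intro h
      have h2 : p ∣ p - 1 := by
        have := (mul_dvd_mul_iff_left (a := p) (by omega : p ≠ 0)).mp
          (by rwa [← pow_two] : p * p ∣ p * (p - 1))
        exact this
      have := Nat.le_of_dvd (by omega) h2
      omega
    · exact fun h => hpl ((dvd_pow_self p two_ne_zero).trans h)
  -- ℓ does not divide L
  have hLne : lcm (p * (p - 1)) (q - 1) ≠ 0 := by
    rw [lcm_eq_nat_lcm]; exact Nat.lcm_ne_zero hpp0 hq10
  have hnlL : ¬ ℓ ∣ lcm (lcm (p * (p - 1)) (q - 1)) (ℓ - 1) := by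
    intro h
    have h' := (pow_dvd_lcm_iff (k := 1) hl hLne hl10).mp (by rwa [pow_one])
    rw [pow_dvd_lcm_iff hl hpp0 hq10] at h'
    simp only [pow_one] at h'
    rcases h' with (h2 | h2) | h2
    · rcases (Nat.Prime.dvd_mul hl).mp h2 with h3 | h3
      · have := Nat.le_of_dvd (by omega) h3; omega
      · have := Nat.le_of_dvd (by omega) h3; omega
    · have := Nat.le_of_dvd (by omega) h2; omega
    · have := Nat.le_of_dvd (by omega) h2; omega
  -- write lam = p * t
  obtain ⟨t, ht⟩ := hpdvd
  have hqt : q ∣ t := (hpq_cop.symm).dvd_of_dvd_mul_left (ht ▸ hqdvd)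
  have hnpt : ¬ p ∣ t := by
    intro h
    exact hnp2L (dvd_trans (by rw [pow_two, ht]; exact mul_dvd_mul_left p h) hlamL)
  have hnlt : ¬ ℓ ∣ t := by
    intro h
    exact hnlL ((h.trans (ht ▸ dvd_mul_left t p)).trans hlamL)
  -- prime factors and radical
  have hpf : (p ^ 2 * q * ℓ).primeFactors = {p, q, ℓ} := by
    rw [Nat.primeFactors_mul (by positivity) (by omega),
      Nat.primeFactors_mul (by positivity) (by omega),
      Nat.primeFactors_pow _ (by norm_num : 2 ≠ 0),
      hp.primeFactors, hq.primeFactors, hl.primeFactors]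
    ext x; simp [or_assoc]
  have hrad : radN (p ^ 2 * q * ℓ) = p * (q * ℓ) := by
    unfold radN
    rw [hpf, Finset.prod_insert (by simp [hpneq, hpl']),
      Finset.prod_insert (by simp [hql']), Finset.prod_singleton]
  have htotrad : Nat.totient (p * (q * ℓ)) = (p - 1) * ((q - 1) * (ℓ - 1)) := by
    rw [Nat.totient_mul (hpq_cop.mul_right hpl_cop), Nat.totient_mul hql_cop,
      Nat.totient_prime hp, Nat.totient_prime hq, Nat.totient_prime hl]
  set R := (p - 1) * ((q - 1) * (ℓ - 1)) with hR
  have hR0 : 0 < R := by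
    have : 0 < (q - 1) * (ℓ - 1) := Nat.mul_pos (by omega) (by omega)
    exact Nat.mul_pos (by omega) this
  have htot : Nat.totient (p ^ 2 * q * ℓ) = p * R := by
    rw [Nat.totient_mul hcop2, Nat.totient_mul hcop1,
      Nat.totient_prime_pow hp (by norm_num : 0 < 2), pow_one,
      Nat.totient_prime hq, Nat.totient_prime hl, hR]
    ring
  -- delta is 1
  have hmodd : Odd (p ^ 2 * q * ℓ) := ((hpodd.pow).mul hqodd).mul hlodd
  have hn4 : ¬ 4 ∣ p ^ 2 * q * ℓ := by
    intro h
    have h2 : 2 ∣ p ^ 2 * q * ℓ := dvd_trans (by norm_num) h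
    rw [Nat.odd_iff] at hmodd
    omega
  have hdelta : deltaN (p ^ 2 * q * ℓ) = 1 := if_neg hn4
  -- useful divisibilities into R
  have hqR : q ∣ R := hql.trans ⟨(p - 1) * (q - 1), by ring⟩
  have hpR : p ∣ R := hdvd.trans ⟨(p - 1) * (ℓ - 1), by ring⟩
  have hnlR : ¬ ℓ ∣ R := by
    intro h
    rcases (Nat.Prime.dvd_mul hl).mp h with h2 | h2
    · have := Nat.le_of_dvd (by omega) h2; omega
    · rcases (Nat.Prime.dvd_mul hl).mp h2 with h3 | h3
      · have := Nat.le_of_dvd (by omega) h3; omega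
      · have := Nat.le_of_dvd (by omega) h3; omega
  constructor
  · -- fFun
    unfold fFun
    rw [hdelta, one_mul, hrad, htotrad, htot, ← hlam, ht]
    have hdiv : p * t * R / (p * R) = t := by
      rw [mul_assoc, Nat.mul_div_mul_left _ _ (by omega : 0 < p),
        Nat.mul_div_cancel _ hR0]
    rw [hdiv, show p ^ 2 * q * ℓ = p ^ 2 * (q * ℓ) by ring,
      Nat.Coprime.gcd_mul_left_cancel (q * ℓ)
        (((hp.coprime_iff_not_dvd).mpr hnpt).pow_left 2),
      Nat.Coprime.gcd_mul_right_cancel q ((hl.coprime_iff_not_dvd).mpr hnlt),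
      Nat.gcd_eq_left hqt]
  · -- dFun
    unfold dFun
    rw [hdelta, one_mul, hrad, htotrad,
      Nat.Coprime.gcd_mul_right_cancel (p ^ 2 * q)
        ((hl.coprime_iff_not_dvd).mpr hnlR)]
    obtain ⟨u, hu⟩ := hdvd
    have hnpu : ¬ p ∣ u := by
      intro h
      exact hndvd (by rw [hu, pow_two]; exact mul_dvd_mul_left p h)
    have hRS : R = p * ((p - 1) * (u * (ℓ - 1))) := by rw [hR, hu]; ring
    have hnpS : ¬ p ∣ (p - 1) * (u * (ℓ - 1)) := by
      intro h
      rcases (Nat.Prime.dvd_mul hp).mp h with h2 | h2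
      · have := Nat.le_of_dvd (by omega) h2; omega
      · rcases (Nat.Prime.dvd_mul hp).mp h2 with h3 | h3
        · exact hnpu h3
        · exact hpl h3
    have hqS : q ∣ (p - 1) * (u * (ℓ - 1)) :=
      (hpq_cop.symm).dvd_of_dvd_mul_left (hRS ▸ hqR)
    rw [hRS, show p ^ 2 * q = p * (p * q) by ring, Nat.gcd_mul_left,
      Nat.Coprime.gcd_mul_left_cancel q ((hp.coprime_iff_not_dvd).mpr hnpS),
      Nat.gcd_eq_left hqS]
end

section
/- For every integer r ≥ 2 and any prime p with p ≡ 1 + 2^(r−1) (mod 2^r), setting m = 2^(r+1)·p, we have f(m) = 1 and d(m) = 2^r. -/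
/-! Write `p - 1 = 2 ^ (r - 1) * t` with `t` odd. For `m = 2 ^ (r + 1) * p` we have `δ(m) = 2`,
`rad m = 2p`, `φ(m) = 2 ^ r (p - 1)`, and `λ(m) = lcm (2 ^ (r - 1)) (p - 1) = p - 1`. Hence the
quotient in `f(m)` is exactly `t`, which is coprime to `m` (it is odd and divides `p - 1`), and
`d(m) = gcd (2 ^ r * 2p) (2 ^ r * t) = 2 ^ r`. -/

lemma deltaN_of_four_dvd {m : ℕ} (h : 4 ∣ m) : deltaN m = 2 := if_pos h

open UniqueFactorizationMonoid in
lemma radN_eq_radical (m : ℕ) : radN m = radical m :=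
  Nat.radical_eq_prod_primeFactors.symm

lemma carmichael_eq_arithmeticFunction_carmichael {m : ℕ} (hm : m ≠ 0) :
    carmichael m = ArithmeticFunction.carmichael m :=
  (ArithmeticFunction.carmichael_eq_exponent hm).symm

section OddPrime

variable {p : ℕ} (hp : p.Prime) (hp2 : p ≠ 2)
include hp hp2

lemma coprime_two_pow_of_prime_ne_two (n : ℕ) : Nat.Coprime (2 ^ n) p :=
  (Nat.coprime_two_left.2 (hp.odd_of_ne_two hp2)).pow_left n

lemma radN_two_pow_mul_prime {n : ℕ} (hn : n ≠ 0) : radN (2 ^ n * p) = 2 * p := by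
  rw [radN_eq_radical, UniqueFactorizationMonoid.radical_mul
      (Nat.coprime_iff_isRelPrime.mp (coprime_two_pow_of_prime_ne_two hp hp2 n)),
    UniqueFactorizationMonoid.radical_pow_of_prime Nat.prime_two.prime hn,
    UniqueFactorizationMonoid.radical_of_prime hp.prime]
  simp only [normalize_eq]

lemma totient_radN_two_pow_mul_prime {n : ℕ} (hn : n ≠ 0) :
    Nat.totient (radN (2 ^ n * p)) = p - 1 := by
  rw [radN_two_pow_mul_prime hp hp2 hn,
    Nat.totient_mul (Nat.coprime_two_left.2 (hp.odd_of_ne_two hp2)),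
    Nat.totient_two, Nat.totient_prime hp, one_mul]

lemma totient_two_pow_mul_prime {n : ℕ} (hn : n ≠ 0) :
    Nat.totient (2 ^ n * p) = 2 ^ (n - 1) * (p - 1) := by
  rw [Nat.totient_mul (coprime_two_pow_of_prime_ne_two hp hp2 n),
    Nat.totient_prime_pow Nat.prime_two (Nat.pos_of_ne_zero hn), Nat.totient_prime hp]
  simp

lemma carmichael_two_pow_mul_prime {n : ℕ} (hn : n ≠ 2) :
    carmichael (2 ^ n * p) = Nat.lcm (2 ^ (n - 2)) (p - 1) := by
  rw [carmichael_eq_arithmeticFunction_carmichael (by positivity [hp.pos]),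
    ArithmeticFunction.carmichael_mul (coprime_two_pow_of_prime_ne_two hp hp2 n),
    ArithmeticFunction.carmichael_two_pow_of_ne_two hn, ← pow_one p,
    ArithmeticFunction.carmichael_pow_of_prime_ne_two 1 hp hp2, pow_one, Nat.totient_prime hp]

end OddPrime

lemma exists_odd_of_modEq_one_add_two_pow {p s : ℕ} (hs : s ≠ 0)
    (h : p ≡ 1 + 2 ^ s [MOD 2 ^ (s + 1)]) : ∃ t, Odd t ∧ p = 1 + 2 ^ s * t := by
  have hlt : 1 + 2 ^ s < 2 ^ (s + 1) := by
    rw [pow_succ]; have := Nat.one_lt_two_pow hs; omega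
  have hmod : p % 2 ^ (s + 1) = 1 + 2 ^ s := by rw [h, Nat.mod_eq_of_lt hlt]
  obtain ⟨k, hk⟩ : ∃ k, p = 2 ^ (s + 1) * k + (1 + 2 ^ s) :=
    ⟨p / 2 ^ (s + 1), by rw [← hmod, Nat.div_add_mod]⟩
  exact ⟨2 * k + 1, odd_two_mul_add_one k, by rw [hk, pow_succ]; ring⟩

theorem pair_one_two_pow (r p : ℕ) (hr : 2 ≤ r) (hp : p.Prime)
    (hcong : p ≡ 1 + 2 ^ (r - 1) [MOD 2 ^ r]) :
    fFun (2 ^ (r + 1) * p) = 1 ∧ dFun (2 ^ (r + 1) * p) = 2 ^ r := by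
  have h2q : 2 ^ r = 2 * 2 ^ (r - 1) := by rw [← pow_succ', Nat.sub_add_cancel (by omega)]
  obtain ⟨t, ht, hpt⟩ := exists_odd_of_modEq_one_add_two_pow (p := p) (s := r - 1) (by omega)
    (by rwa [Nat.sub_add_cancel (by omega)])
  have hp1 : p - 1 = 2 ^ (r - 1) * t := by omega
  have hp2 : p ≠ 2 := by
    have hodd : Odd p := hpt ▸ ((Nat.even_pow.2 ⟨even_two, by omega⟩).mul_right t).one_add
    rintro rfl; exact absurd hodd (by decide)
  have htp : Nat.Coprime (2 * p) t := by
    refine Nat.Coprime.mul_left (Nat.coprime_two_left.2 ht) ?_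
    rw [hpt, Nat.coprime_add_mul_right_left]
    exact Nat.coprime_one_left t
  have hδ : deltaN (2 ^ (r + 1) * p) = 2 :=
    deltaN_of_four_dvd ((pow_dvd_pow 2 (by omega : 2 ≤ r + 1)).mul_right p)
  have hφrad := totient_radN_two_pow_mul_prime hp hp2 (n := r + 1) (by omega)
  have hcarm : carmichael (2 ^ (r + 1) * p) = p - 1 := by
    rw [carmichael_two_pow_mul_prime hp hp2 (by omega), show r + 1 - 2 = r - 1 by omega,
      Nat.lcm_eq_right (hp1 ▸ dvd_mul_right _ _)]
  have hφ : Nat.totient (2 ^ (r + 1) * p) = 2 ^ r * (p - 1) := by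
    rw [totient_two_pow_mul_prime hp hp2 (by omega), Nat.add_sub_cancel]
  have h2p1 : 2 * (p - 1) = 2 ^ r * t := by rw [hp1, h2q, mul_assoc]
  have hm : 2 ^ (r + 1) * p = 2 ^ r * (2 * p) := by ring
  constructor
  · have hquot : 2 * (p - 1) * (p - 1) / (2 ^ r * (p - 1)) = t := by
      rw [h2p1, mul_right_comm,
        Nat.mul_div_cancel_left t (by have := Nat.sub_pos_of_lt hp.one_lt; positivity)]
    rw [fFun, hδ, hcarm, hφrad, hφ, hquot, hm]
    exact (Nat.coprime_two_left.2 ht).pow_left r |>.mul_left htp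
  · rw [dFun, hδ, hφrad, h2p1, hm, Nat.gcd_mul_left, htp, mul_one]
end

section
/- Assume there exist infinitely many primes p such that 2p + 1 is also prime (Sophie Germain primes). Then limsup over m of d(m)/m^(1/2) is at least 1/√2, where d(m) = gcd(m, δ(m)·φ(rad(m))). -/
lemma aux_dvd {p : ℕ} (hp : p.Prime) (hq : (2 * p + 1).Prime) (hp2 : p ≠ 2) :
    2 * p ∣ dFun (2 * p * (2 * p + 1)) := by
  have hple := hp.two_le
  have hc2p : Nat.Coprime 2 p := (Nat.coprime_primes Nat.prime_two hp).mpr (Ne.symm hp2)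
  have hc2q : Nat.Coprime 2 (2 * p + 1) :=
    (Nat.coprime_primes Nat.prime_two hq).mpr (by omega)
  have hcpq : Nat.Coprime p (2 * p + 1) := (Nat.coprime_primes hp hq).mpr (by omega)
  have hc2pq : Nat.Coprime (2 * p) (2 * p + 1) := Nat.Coprime.mul hc2q hcpq
  have hsq2p : Squarefree (2 * p) :=
    (Nat.squarefree_mul hc2p).mpr ⟨Nat.prime_two.squarefree, hp.squarefree⟩
  have hsq : Squarefree (2 * p * (2 * p + 1)) :=
    (Nat.squarefree_mul hc2pq).mpr ⟨hsq2p, hq.squarefree⟩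
  have hrad : radN (2 * p * (2 * p + 1)) = 2 * p * (2 * p + 1) :=
    Nat.prod_primeFactors_of_squarefree hsq
  have htot : 2 * p ∣ Nat.totient (2 * p * (2 * p + 1)) := by
    rw [Nat.totient_mul hc2pq, Nat.totient_prime hq]
    have h1 : 2 * p + 1 - 1 = 2 * p := by omega
    rw [h1]
    exact dvd_mul_left _ _
  apply Nat.dvd_gcd
  · exact Dvd.intro _ rfl
  · rw [hrad]
    exact Dvd.dvd.mul_left htot _

theorem limsup_dFun_ge (hSG : {p : ℕ | p.Prime ∧ (2 * p + 1).Prime}.Infinite) :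
    ∀ ε : ℝ, 0 < ε →
      {m : ℕ | 1 / Real.sqrt 2 - ε < (dFun m : ℝ) / Real.sqrt m}.Infinite := by
  intro ε hε
  have hS : {p : ℕ | p.Prime ∧ (2 * p + 1).Prime ∧ p ≠ 2}.Infinite := by
    apply (hSG.diff (Set.finite_singleton 2)).mono
    rintro x ⟨⟨h1, h2⟩, h3⟩
    exact ⟨h1, h2, h3⟩
  have hmono : StrictMono (fun p : ℕ => 2 * p * (2 * p + 1)) := by
    intro a b h
    simp only
    nlinarith
  have himg := hS.image (hmono.injective.injOn)
  apply himg.mono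
  rintro m ⟨p, ⟨hp, hq, hp2⟩, rfl⟩
  simp only [Set.mem_setOf_eq]
  have hple := hp.two_le
  have hmpos : 0 < 2 * p * (2 * p + 1) := by positivity
  have hdpos : 0 < dFun (2 * p * (2 * p + 1)) :=
    Nat.gcd_pos_of_pos_left _ hmpos
  have hdge : (2 * p : ℝ) ≤ (dFun (2 * p * (2 * p + 1)) : ℝ) := by
    exact_mod_cast Nat.le_of_dvd hdpos (aux_dvd hp hq hp2)
  have hsm : (0:ℝ) < Real.sqrt (2 * p * (2 * p + 1) : ℕ) := by
    apply Real.sqrt_pos.mpr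
    exact_mod_cast hmpos
  have h2 : (0:ℝ) < Real.sqrt 2 := by positivity
  have key : 1 / Real.sqrt 2 ≤ (2 * p : ℝ) / Real.sqrt (2 * p * (2 * p + 1) : ℕ) := by
    rw [div_le_div_iff₀ h2 hsm, one_mul]
    have hsq : Real.sqrt (2 * p * (2 * p + 1) : ℕ) ≤ 2 * p * Real.sqrt 2 := by
      have hnn : (0:ℝ) ≤ 2 * p * Real.sqrt 2 := by positivity
      have hle : ((2 * p * (2 * p + 1) : ℕ) : ℝ) ≤ (2 * p * Real.sqrt 2) ^ 2 := by
        have : (2 * (p:ℝ) * Real.sqrt 2) ^ 2 = 8 * p ^ 2 := by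
          rw [mul_pow, mul_pow, Real.sq_sqrt (by norm_num : (0:ℝ) ≤ 2)]
          ring
        rw [this]
        have hpr : (2:ℝ) ≤ (p:ℝ) := by exact_mod_cast hple
        push_cast
        nlinarith [hpr]
      calc Real.sqrt (2 * p * (2 * p + 1) : ℕ) ≤ Real.sqrt ((2 * p * Real.sqrt 2) ^ 2) :=
            Real.sqrt_le_sqrt hle
        _ = 2 * p * Real.sqrt 2 := Real.sqrt_sq hnn
    calc Real.sqrt (2 * p * (2 * p + 1) : ℕ) ≤ 2 * p * Real.sqrt 2 := hsq
      _ = (2 * p : ℝ) * Real.sqrt 2 := by push_cast; ring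
  have key2 : (2 * p : ℝ) / Real.sqrt (2 * p * (2 * p + 1) : ℕ)
      ≤ (dFun (2 * p * (2 * p + 1)) : ℝ) / Real.sqrt (2 * p * (2 * p + 1) : ℕ) := by
    gcongr
  linarith
end
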